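/- arXiv:1804.05694 — 3 statements merged into one kernel-verified Lean document; each statement's English description precedes it below -/
import Mathlib

section
/- Let h > 0 and let (Z1, Z2) be a random vector with values in (0,∞)² with joint density l_h, whose margins are standard Fréchet. Let η1, η2 ∈ ℝ, τ1, τ2 > 0, ξ1, ξ2 ≠ 0, and β1, β2 positive integers with β1ξ1 < 1/2 and β2ξ2 < 1/2. Set W_i = (η_i − τ_i/ξ_i) + (τ_i/ξ_i) Z_i^{ξ_i} for i = 1, 2. Then Cov(W1^{β1}, W2^{β2}) = Σ_{k1=0}^{β1} Σ_{k2=0}^{β2} B_{k1,k2} [ g^(s)_{(β1−k1)ξ1, (β2−k2)ξ2}(h) − Γ(1 − (β1−k1)ξ1) Γ(1 − (β2−k2)ξ2) ], where B_{k1,k2} = binom(β1,k1) (η1 − τ1/ξ1)^{k1} (τ1/ξ1)^{β1−k1} binom(β2,k2) (η2 − τ2/ξ2)^{k2} (τ2/ξ2)^{β2−k2}. -/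
open MeasureTheory

noncomputable def nPdf (x : ℝ) : ℝ := Real.exp (-(x ^ 2) / 2) / Real.sqrt (2 * Real.pi)

noncomputable def nCdf (x : ℝ) : ℝ := ∫ t in Set.Iic x, nPdf t

noncomputable def C1 (θ h : ℝ) : ℝ :=
  nCdf (h / 2 + Real.log θ / h) + (1 / θ) * nCdf (h / 2 - Real.log θ / h)

noncomputable def C2 (θ h : ℝ) : ℝ :=
  (nCdf (h / 2 + Real.log θ / h) + (1 / h) * nPdf (h / 2 + Real.log θ / h)
      - (1 / (h * θ)) * nPdf (h / 2 - Real.log θ / h))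
    * ((1 / θ ^ 2) * nCdf (h / 2 - Real.log θ / h)
      + (1 / (h * θ ^ 2)) * nPdf (h / 2 - Real.log θ / h)
      - (1 / (h * θ)) * nPdf (h / 2 + Real.log θ / h))

noncomputable def C3 (θ h : ℝ) : ℝ :=
  (1 / (h ^ 2 * θ)) * (h / 2 - Real.log θ / h) * nPdf (h / 2 + Real.log θ / h)
    + (1 / (h ^ 2 * θ ^ 2)) * (h / 2 + Real.log θ / h) * nPdf (h / 2 - Real.log θ / h)

noncomputable def gs (β1 β2 h : ℝ) : ℝ :=
  if h = 0 then Real.Gamma (1 - β1 - β2)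
  else ∫ θ in Set.Ioi (0 : ℝ),
    θ ^ β2 * (C2 θ h * C1 θ h ^ (β1 + β2 - 2) * Real.Gamma (2 - β1 - β2)
      + C3 θ h * C1 θ h ^ (β1 + β2 - 1) * Real.Gamma (1 - β1 - β2))

/-- The bivariate density `l_h` on `(0,∞)²` of the Hüsler–Reiss / Brown–Resnick pair. -/
noncomputable def lBR (h z1 z2 : ℝ) : ℝ :=
  (Real.exp (-(nCdf (h / 2 + Real.log (z2 / z1) / h)) / z1
      - (nCdf (h / 2 - Real.log (z2 / z1) / h)) / z2))
    * ((nCdf (h / 2 + Real.log (z2 / z1) / h) / z1 ^ 2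
          + nPdf (h / 2 + Real.log (z2 / z1) / h) / (h * z1 ^ 2)
          - nPdf (h / 2 - Real.log (z2 / z1) / h) / (h * z1 * z2))
        * (nCdf (h / 2 - Real.log (z2 / z1) / h) / z2 ^ 2
          + nPdf (h / 2 - Real.log (z2 / z1) / h) / (h * z2 ^ 2)
          - nPdf (h / 2 + Real.log (z2 / z1) / h) / (h * z1 * z2))
      + (h / 2 - Real.log (z2 / z1) / h) * nPdf (h / 2 + Real.log (z2 / z1) / h)
          / (h ^ 2 * z1 ^ 2 * z2)
      + (h / 2 + Real.log (z2 / z1) / h) * nPdf (h / 2 - Real.log (z2 / z1) / h)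
          / (h ^ 2 * z1 * z2 ^ 2))

/-- Covariance of two square-integrable real random variables:
`Cov(U,V) = E[UV] - E[U]E[V]`. -/
noncomputable def covar {Ω : Type*} [MeasurableSpace Ω] (P : MeasureTheory.Measure Ω)
    (U V : Ω → ℝ) : ℝ :=
  (∫ ω, U ω * V ω ∂P) - (∫ ω, U ω ∂P) * (∫ ω, V ω ∂P)

def IsStdFrechet {Ω : Type*} [MeasurableSpace Ω] (P : Measure Ω) (X : Ω → ℝ) : Prop :=
  ∀ x : ℝ, P {ω | X ω ≤ x} = if 0 < x then ENNReal.ofReal (Real.exp (-1 / x)) else 0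

/-! Expanding both powers binomially reduces the covariance to the moments `E[Z₁^a]`, `E[Z₂^b]`
and `E[Z₁^a Z₂^b]`. A standard Fréchet variable is the reciprocal of a standard exponential one,
so `E[Z^a] = Γ(1 - a)`. For the joint moment substitute `z₂ = θ z₁` in `l_h`: the identity
`φ(h/2 - log θ / h) = θ φ(h/2 + log θ / h)` turns `z₁ l_h(z₁, θ z₁) z₁^a (θ z₁)^b` into
`θ^b e^{-C1(θ)/z₁} (C2(θ) z₁^{a+b-3} + C3(θ) z₁^{a+b-2})`, and the `z₁`-integral is the Gamma
integral `∫₀^∞ e^{-c/x} x^{-1-t} dx = c^{-t} Γ(t)`, which leaves the `θ`-integral defining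
`g^(s)`. -/

open Real Set Filter ProbabilityTheory

lemma nPdf_pos (x : ℝ) : 0 < nPdf x := by
  unfold nPdf
  positivity

@[fun_prop]
lemma measurable_nPdf : Measurable nPdf := by
  unfold nPdf
  fun_prop

lemma nPdf_eq_gaussianPDFReal : nPdf = gaussianPDFReal 0 1 := by
  ext x
  simp [nPdf, gaussianPDFReal, div_eq_inv_mul]

lemma integrable_nPdf : Integrable nPdf :=
  nPdf_eq_gaussianPDFReal ▸ integrable_gaussianPDFReal 0 1

lemma nCdf_mono : Monotone nCdf := fun _ _ hab =>
  setIntegral_mono_set integrable_nPdf.integrableOn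
    (Eventually.of_forall fun t => (nPdf_pos t).le) (Iic_subset_Iic.2 hab).eventuallyLE

@[fun_prop]
lemma measurable_nCdf : Measurable nCdf := nCdf_mono.measurable

lemma nCdf_pos (x : ℝ) : 0 < nCdf x := by
  refine (setIntegral_pos_iff_support_of_nonneg_ae
    (Eventually.of_forall fun t => (nPdf_pos t).le) integrable_nPdf.integrableOn).2 ?_
  have : Function.support nPdf = univ := Function.support_eq_univ fun t => (nPdf_pos t).ne'
  simp [this]

lemma nPdf_half_sub_log_div {h θ : ℝ} (hh : h ≠ 0) (hθ : 0 < θ) :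
    nPdf (h / 2 - log θ / h) = θ * nPdf (h / 2 + log θ / h) := by
  unfold nPdf
  rw [mul_div_assoc', ← exp_log hθ, ← exp_add, log_exp]
  congr 2
  field_simp
  ring

lemma C1_pos {h θ : ℝ} (hθ : 0 < θ) : 0 < C1 θ h := by
  have := nCdf_pos (h / 2 + log θ / h)
  have := nCdf_pos (h / 2 - log θ / h)
  unfold C1
  positivity

lemma C2_eq {h θ : ℝ} (hh : h ≠ 0) (hθ : 0 < θ) :
    C2 θ h = nCdf (h / 2 + log θ / h) * nCdf (h / 2 - log θ / h) / θ ^ 2 := by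
  unfold C2
  rw [nPdf_half_sub_log_div hh hθ]
  field_simp
  ring

lemma C3_eq {h θ : ℝ} (hh : h ≠ 0) (hθ : 0 < θ) :
    C3 θ h = nPdf (h / 2 + log θ / h) / (h * θ) := by
  unfold C3
  rw [nPdf_half_sub_log_div hh hθ]
  field_simp
  ring

lemma C2_nonneg {h θ : ℝ} (hh : h ≠ 0) (hθ : 0 < θ) : 0 ≤ C2 θ h := by
  have := nCdf_pos (h / 2 + log θ / h)
  have := nCdf_pos (h / 2 - log θ / h)
  rw [C2_eq hh hθ]
  positivity

lemma C3_nonneg {h θ : ℝ} (hh : 0 < h) (hθ : 0 < θ) : 0 ≤ C3 θ h := by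
  have := nPdf_pos (h / 2 + log θ / h)
  rw [C3_eq hh.ne' hθ]
  positivity

@[fun_prop]
lemma measurable_C1 (h : ℝ) : Measurable fun θ => C1 θ h := by unfold C1; fun_prop

@[fun_prop]
lemma measurable_C2 (h : ℝ) : Measurable fun θ => C2 θ h := by unfold C2; fun_prop

@[fun_prop]
lemma measurable_C3 (h : ℝ) : Measurable fun θ => C3 θ h := by unfold C3; fun_prop

@[fun_prop]
lemma measurable_lBR (h : ℝ) : Measurable fun p : ℝ × ℝ => lBR h p.1 p.2 := by
  unfold lBR
  fun_prop

lemma lBR_eq {h z1 z2 : ℝ} (hh : h ≠ 0) (h1 : 0 < z1) (h2 : 0 < z2) :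
    lBR h z1 z2 = exp (-nCdf (h / 2 + log (z2 / z1) / h) / z1
        - nCdf (h / 2 - log (z2 / z1) / h) / z2)
      * (nCdf (h / 2 + log (z2 / z1) / h) * nCdf (h / 2 - log (z2 / z1) / h) / (z1 ^ 2 * z2 ^ 2)
        + nPdf (h / 2 + log (z2 / z1) / h) / (h * z1 ^ 2 * z2)) := by
  unfold lBR
  rw [nPdf_half_sub_log_div hh (div_pos h2 h1)]
  congr 1
  field_simp
  ring

lemma lBR_nonneg {h z1 z2 : ℝ} (hh : 0 < h) (h1 : 0 < z1) (h2 : 0 < z2) : 0 ≤ lBR h z1 z2 := by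
  have := nCdf_pos (h / 2 + log (z2 / z1) / h)
  have := nCdf_pos (h / 2 - log (z2 / z1) / h)
  have := nPdf_pos (h / 2 + log (z2 / z1) / h)
  rw [lBR_eq hh.ne' h1 h2]
  positivity

/-- The factor `z1` in front is the Jacobian of `z2 = z1 * θ`. -/
lemma mul_lBR_mul_rpow {h θ z1 a1 a2 : ℝ} (hh : h ≠ 0) (hθ : 0 < θ) (hz : 0 < z1) :
    z1 * (lBR h z1 (z1 * θ) * (z1 ^ a1 * (z1 * θ) ^ a2))
      = θ ^ a2 * (exp (-(C1 θ h / z1))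
          * (C2 θ h * z1 ^ (a1 + a2 - 3) + C3 θ h * z1 ^ (a1 + a2 - 2))) := by
  rw [lBR_eq hh hz (mul_pos hz hθ), mul_div_cancel_left₀ θ hz.ne', C2_eq hh hθ, C3_eq hh hθ,
    mul_rpow hz.le hθ.le, rpow_sub hz, rpow_sub hz, rpow_add hz]
  unfold C1
  norm_num
  field_simp
  ring_nf

lemma ofReal_Gamma_eq_lintegral {t : ℝ} (ht : 0 < t) :
    ENNReal.ofReal (Gamma t) = ∫⁻ x in Ioi 0, ENNReal.ofReal (exp (-x) * x ^ (t - 1)) :=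
  Gamma_eq_integral ht ▸ ofReal_integral_eq_lintegral_ofReal (GammaIntegral_convergent ht)
    ((ae_restrict_iff' measurableSet_Ioi).2 (Eventually.of_forall fun x (_ : 0 < x) => by
      positivity))

lemma setLIntegral_Ioi_zero_eq_comp_mul_left {c : ℝ} (hc : 0 < c) (g : ℝ → ENNReal) :
    ∫⁻ x in Ioi 0, g x = ∫⁻ θ in Ioi 0, ENNReal.ofReal c * g (c * θ) := by
  have himg : (c * ·) '' Ioi 0 = Ioi 0 := by
    rw [image_mul_left_Ioi hc, mul_zero]
  nth_rewrite 1 [← himg]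
  rw [lintegral_image_eq_lintegral_abs_deriv_mul measurableSet_Ioi
    (fun x _ => ((hasDerivAt_id' x).const_mul c).hasDerivWithinAt)
    (mul_right_injective₀ hc.ne').injOn g]
  simp [abs_of_pos hc]

lemma lintegral_exp_neg_div_mul_rpow {c t : ℝ} (hc : 0 < c) (ht : 0 < t) :
    ∫⁻ x in Ioi 0, ENNReal.ofReal (exp (-(c / x)) * x ^ (-1 - t))
      = ENNReal.ofReal (c ^ (-t) * Gamma t) := by
  have himg : (c / ·) '' Ioi 0 = Ioi 0 := by
    refine Subset.antisymm (image_subset_iff.2 fun u (hu : 0 < u) => div_pos hc hu)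
      fun y (hy : 0 < y) => ⟨c / y, div_pos hc hy, div_div_cancel₀ hc.ne'⟩
  nth_rewrite 1 [← himg]
  rw [lintegral_image_eq_lintegral_abs_deriv_mul (f' := fun u => -(c / u ^ 2))
    measurableSet_Ioi
    (fun u hu => by
      simpa [div_eq_mul_inv, mul_comm] using
        ((hasDerivAt_inv (ne_of_gt hu)).const_mul c).hasDerivWithinAt)
    (fun a (ha : 0 < a) b (hb : 0 < b) hab => by
      simpa [div_eq_div_iff ha.ne' hb.ne', hc.ne', eq_comm] using hab) _,
    ENNReal.ofReal_mul (by positivity), ofReal_Gamma_eq_lintegral ht,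
    ← lintegral_const_mul' _ _ ENNReal.ofReal_ne_top]
  refine setLIntegral_congr_fun measurableSet_Ioi fun u (hu : 0 < u) => ?_
  rw [← ENNReal.ofReal_mul (abs_nonneg _), ← ENNReal.ofReal_mul (by positivity)]
  congr 1
  rw [div_div_cancel₀ hc.ne', abs_neg, abs_of_pos (by positivity), div_rpow hc.le hu.le,
    rpow_sub hc, rpow_sub hu, rpow_sub_one hu.ne', rpow_neg_one, rpow_neg_one, rpow_neg hc.le]
  field_simp

lemma lintegral_exp_neg_div_mul_add_rpow {C s A B : ℝ} (hC : 0 < C) (hs : s < 1) (hA : 0 ≤ A)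
    (hB : 0 ≤ B) :
    ∫⁻ x in Ioi 0, ENNReal.ofReal (exp (-(C / x)) * (A * x ^ (s - 3) + B * x ^ (s - 2)))
      = ENNReal.ofReal (A * (C ^ (s - 2) * Gamma (2 - s)) + B * (C ^ (s - 1) * Gamma (1 - s))) := by
  have := Gamma_pos_of_pos (show 0 < 2 - s by linarith)
  have := Gamma_pos_of_pos (show 0 < 1 - s by linarith)
  have hsplit : ∀ x ∈ Ioi (0 : ℝ),
      ENNReal.ofReal (exp (-(C / x)) * (A * x ^ (s - 3) + B * x ^ (s - 2)))
        = ENNReal.ofReal A * ENNReal.ofReal (exp (-(C / x)) * x ^ (-1 - (2 - s)))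
          + ENNReal.ofReal B * ENNReal.ofReal (exp (-(C / x)) * x ^ (-1 - (1 - s))) := by
    intro x (hx : 0 < x)
    rw [← ENNReal.ofReal_mul hA, ← ENNReal.ofReal_mul hB,
      ← ENNReal.ofReal_add (by positivity) (by positivity)]
    ring_nf
  rw [setLIntegral_congr_fun measurableSet_Ioi hsplit, lintegral_add_left (by fun_prop),
    lintegral_const_mul' _ _ ENNReal.ofReal_ne_top, lintegral_const_mul' _ _ ENNReal.ofReal_ne_top,
    lintegral_exp_neg_div_mul_rpow hC (by linarith),
    lintegral_exp_neg_div_mul_rpow hC (by linarith),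
    ← ENNReal.ofReal_mul hA, ← ENNReal.ofReal_mul hB, neg_sub, neg_sub,
    ← ENNReal.ofReal_add (by positivity) (by positivity)]

noncomputable def gsIntegrand (β1 β2 h θ : ℝ) : ℝ :=
  θ ^ β2 * (C2 θ h * C1 θ h ^ (β1 + β2 - 2) * Gamma (2 - β1 - β2)
    + C3 θ h * C1 θ h ^ (β1 + β2 - 1) * Gamma (1 - β1 - β2))

lemma gs_eq_integral_gsIntegrand {β1 β2 h : ℝ} (hh : h ≠ 0) :
    gs β1 β2 h = ∫ θ in Ioi 0, gsIntegrand β1 β2 h θ :=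
  if_neg hh

lemma measurable_gsIntegrand (β1 β2 h : ℝ) : Measurable (gsIntegrand β1 β2 h) := by
  unfold gsIntegrand
  fun_prop

lemma gsIntegrand_nonneg {β1 β2 h θ : ℝ} (hh : 0 < h) (hθ : 0 < θ) (hβ : β1 + β2 < 1) :
    0 ≤ gsIntegrand β1 β2 h θ := by
  have := C1_pos (h := h) hθ
  have := C2_nonneg hh.ne' hθ
  have := C3_nonneg hh hθ
  have := Gamma_pos_of_pos (show 0 < 2 - β1 - β2 by linarith)
  have := Gamma_pos_of_pos (show 0 < 1 - β1 - β2 by linarith)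
  unfold gsIntegrand
  positivity

lemma lintegral_lBR_mul_rpow {h a1 a2 : ℝ} (hh : 0 < h) (ha : a1 + a2 < 1) :
    ∫⁻ p in Ioi (0 : ℝ) ×ˢ Ioi (0 : ℝ), ENNReal.ofReal (lBR h p.1 p.2 * (p.1 ^ a1 * p.2 ^ a2))
      = ∫⁻ θ in Ioi 0, ENNReal.ofReal (gsIntegrand a1 a2 h θ) := by
  have hsubst : ∀ z1 ∈ Ioi (0 : ℝ),
      ∫⁻ z2 in Ioi 0, ENNReal.ofReal (lBR h z1 z2 * (z1 ^ a1 * z2 ^ a2))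
        = ∫⁻ θ in Ioi 0, ENNReal.ofReal (θ ^ a2 * (exp (-(C1 θ h / z1))
            * (C2 θ h * z1 ^ (a1 + a2 - 3) + C3 θ h * z1 ^ (a1 + a2 - 2)))) := by
    intro z1 (hz1 : 0 < z1)
    rw [setLIntegral_Ioi_zero_eq_comp_mul_left hz1]
    refine setLIntegral_congr_fun measurableSet_Ioi fun θ (hθ : 0 < θ) => ?_
    rw [← ENNReal.ofReal_mul hz1.le, mul_lBR_mul_rpow hh.ne' hθ hz1]
  rw [Measure.volume_eq_prod, ← Measure.prod_restrict, lintegral_prod _ (by fun_prop),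
    setLIntegral_congr_fun measurableSet_Ioi hsubst, lintegral_lintegral_swap (by fun_prop)]
  refine setLIntegral_congr_fun measurableSet_Ioi fun θ (hθ : 0 < θ) => ?_
  simp only [ENNReal.ofReal_mul (rpow_nonneg hθ.le a2)]
  rw [lintegral_const_mul' _ _ ENNReal.ofReal_ne_top,
    lintegral_exp_neg_div_mul_add_rpow (C1_pos hθ) ha (C2_nonneg hh.ne' hθ) (C3_nonneg hh hθ),
    ← ENNReal.ofReal_mul (rpow_nonneg hθ.le a2), gsIntegrand]
  ring_nf

theorem integral_rpow_mul_rpow_eq_gs {Ω : Type*} [MeasurableSpace Ω] {P : Measure Ω}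
    {h : ℝ} (hh : 0 < h) {Z : Ω → ℝ × ℝ} (hZ : Measurable Z)
    (hpos : ∀ ω, 0 < (Z ω).1 ∧ 0 < (Z ω).2)
    (hdens : P.map Z = ((volume : Measure (ℝ × ℝ)).restrict
        (Ioi (0 : ℝ) ×ˢ Ioi (0 : ℝ))).withDensity (fun p => ENNReal.ofReal (lBR h p.1 p.2)))
    {a1 a2 : ℝ} (ha : a1 + a2 < 1) :
    ∫ ω, (Z ω).1 ^ a1 * (Z ω).2 ^ a2 ∂P = gs a1 a2 h := by
  have hnn : 0 ≤ᵐ[P] fun ω => (Z ω).1 ^ a1 * (Z ω).2 ^ a2 := Eventually.of_forall fun ω =>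
    mul_nonneg (rpow_nonneg (hpos ω).1.le _) (rpow_nonneg (hpos ω).2.le _)
  rw [integral_eq_lintegral_of_nonneg_ae hnn (by fun_prop),
    ← lintegral_map (f := fun p : ℝ × ℝ => ENNReal.ofReal (p.1 ^ a1 * p.2 ^ a2)) (by fun_prop) hZ,
    hdens, lintegral_withDensity_eq_lintegral_mul _ (by fun_prop) (by fun_prop)]
  simp only [Pi.mul_apply]
  rw [setLIntegral_congr_fun (measurableSet_Ioi.prod measurableSet_Ioi) fun p hp =>
      (ENNReal.ofReal_mul (lBR_nonneg hh hp.1 hp.2)).symm,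
    lintegral_lBR_mul_rpow hh ha, gs_eq_integral_gsIntegrand hh.ne',
    integral_eq_lintegral_of_nonneg_ae ((ae_restrict_iff' measurableSet_Ioi).2
      (Eventually.of_forall fun θ hθ => gsIntegrand_nonneg hh hθ ha))
      (measurable_gsIntegrand a1 a2 h).aestronglyMeasurable]

noncomputable def stdExponential : Measure ℝ :=
  (volume.restrict (Ioi 0)).withDensity fun u => ENNReal.ofReal (exp (-u))

noncomputable def stdFrechet : Measure ℝ := stdExponential.map (·⁻¹)

lemma lintegral_exp_neg_Ioi (c : ℝ) :
    ∫⁻ u in Ioi c, ENNReal.ofReal (exp (-u)) = ENNReal.ofReal (exp (-c)) := by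
  rw [← integral_exp_neg_Ioi c, ofReal_integral_eq_lintegral_ofReal (integrableOn_exp_neg_Ioi c)
    (Eventually.of_forall fun u => (exp_pos _).le)]

lemma stdFrechet_Iic (x : ℝ) :
    stdFrechet (Iic x) = if 0 < x then ENNReal.ofReal (exp (-1 / x)) else 0 := by
  rw [stdFrechet, Measure.map_apply measurable_inv measurableSet_Iic, stdExponential,
    withDensity_apply _ (measurable_inv measurableSet_Iic), Measure.restrict_restrict
      (measurable_inv measurableSet_Iic)]
  split_ifs with hx
  · have hset : Inv.inv ⁻¹' Iic x ∩ Ioi 0 = Ici x⁻¹ := by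
      ext u
      simp only [mem_inter_iff, mem_preimage, mem_Iic, mem_Ioi, mem_Ici]
      refine ⟨fun ⟨hux, hu⟩ => (inv_le_comm₀ hu hx).1 hux, fun hxu => ?_⟩
      have hu := (inv_pos.2 hx).trans_le hxu
      exact ⟨(inv_le_comm₀ hu hx).2 hxu, hu⟩
    rw [hset, setLIntegral_congr Ioi_ae_eq_Ici.symm, lintegral_exp_neg_Ioi, neg_div, one_div]
  · have hset : (Inv.inv : ℝ → ℝ) ⁻¹' Iic x ∩ Ioi 0 = ∅ :=
      eq_empty_of_forall_notMem fun u ⟨hux, hu⟩ => hx ((inv_pos.2 hu).trans_le hux)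
    rw [hset, Measure.restrict_empty, lintegral_zero_measure]

instance : IsProbabilityMeasure stdFrechet :=
  ⟨by rw [stdFrechet, Measure.map_apply measurable_inv .univ, preimage_univ, stdExponential,
    withDensity_apply _ .univ, Measure.restrict_univ, lintegral_exp_neg_Ioi, neg_zero, exp_zero,
    ENNReal.ofReal_one]⟩

namespace IsStdFrechet

variable {Ω : Type*} [MeasurableSpace Ω] {P : Measure Ω} {X : Ω → ℝ}

theorem map_eq [IsFiniteMeasure P] (hF : IsStdFrechet P X) (hX : Measurable X) :
    P.map X = stdFrechet :=
  Measure.ext_of_Iic _ _ fun x => by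
    rw [Measure.map_apply hX measurableSet_Iic, stdFrechet_Iic]
    exact hF x

theorem lintegral_rpow [IsFiniteMeasure P] (hF : IsStdFrechet P X) (hX : Measurable X) {a : ℝ}
    (ha : a < 1) : ∫⁻ ω, ENNReal.ofReal (X ω ^ a) ∂P = ENNReal.ofReal (Gamma (1 - a)) := by
  rw [← lintegral_map (f := fun x => ENNReal.ofReal (x ^ a)) (by fun_prop) hX, hF.map_eq hX,
    stdFrechet, lintegral_map (by fun_prop) measurable_inv, stdExponential,
    lintegral_withDensity_eq_lintegral_mul _ (by fun_prop) (by fun_prop),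
    ofReal_Gamma_eq_lintegral (by linarith)]
  refine setLIntegral_congr_fun measurableSet_Ioi fun u (hu : 0 < u) => ?_
  rw [Pi.mul_apply, ← ENNReal.ofReal_mul (exp_pos _).le, inv_rpow hu.le, ← rpow_neg hu.le]
  ring_nf

theorem integrable_rpow [IsFiniteMeasure P] (hF : IsStdFrechet P X) (hX : Measurable X)
    (hpos : ∀ ω, 0 < X ω) {a : ℝ} (ha : a < 1) : Integrable (fun ω => X ω ^ a) P := by
  refine ⟨(hX.pow_const a).aestronglyMeasurable, ?_⟩
  rw [hasFiniteIntegral_iff_ofReal (Eventually.of_forall fun ω => rpow_nonneg (hpos ω).le a),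
    hF.lintegral_rpow hX ha]
  exact ENNReal.ofReal_lt_top

theorem integral_rpow [IsFiniteMeasure P] (hF : IsStdFrechet P X) (hX : Measurable X)
    (hpos : ∀ ω, 0 < X ω) {a : ℝ} (ha : a < 1) : ∫ ω, X ω ^ a ∂P = Gamma (1 - a) := by
  rw [integral_eq_lintegral_of_nonneg_ae
      (Eventually.of_forall fun ω => rpow_nonneg (hpos ω).le a)
      (hX.pow_const a).aestronglyMeasurable,
    hF.lintegral_rpow hX ha, ENNReal.toReal_ofReal (Gamma_pos_of_pos (by linarith)).le]

theorem memLp_two_rpow [IsFiniteMeasure P] (hF : IsStdFrechet P X) (hX : Measurable X)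
    (hpos : ∀ ω, 0 < X ω) {a : ℝ} (ha : a < 1 / 2) : MemLp (fun ω => X ω ^ a) 2 P := by
  refine (memLp_two_iff_integrable_sq (hX.pow_const a).aestronglyMeasurable).2 ?_
  refine (hF.integrable_rpow hX hpos (a := 2 * a) (by linarith)).congr
    (Eventually.of_forall fun ω => ?_)
  dsimp only
  rw [mul_comm, rpow_mul (hpos ω).le, rpow_two]

end IsStdFrechet

lemma add_mul_rpow_pow {z : ℝ} (hz : 0 ≤ z) (c d ξ : ℝ) (β : ℕ) :
    (c + d * z ^ ξ) ^ β = ∑ k ∈ Finset.range (β + 1),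
      (β.choose k * c ^ k * d ^ (β - k)) * z ^ (((β : ℝ) - k) * ξ) := by
  rw [add_pow]
  refine Finset.sum_congr rfl fun k hk => ?_
  rw [mul_pow, ← rpow_natCast (z ^ ξ), ← rpow_mul hz,
    Nat.cast_sub (Nat.lt_succ_iff.1 (Finset.mem_range.1 hk)), mul_comm ξ]
  ring

lemma natCast_sub_mul_lt {β k : ℕ} (hk : k ≤ β) {ξ c : ℝ} (hc : 0 < c) (h : (β : ℝ) * ξ < c) :
    ((β : ℝ) - k) * ξ < c := by
  have : (k : ℝ) ≤ β := by exact_mod_cast hk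
  rcases le_or_gt ξ 0 with hξ | hξ <;> nlinarith

lemma covar_sum_mul_sum {Ω ι κ : Type*} [MeasurableSpace Ω] (P : Measure Ω) (s : Finset ι)
    (t : Finset κ) (a : ι → ℝ) (b : κ → ℝ) (X : ι → Ω → ℝ) (Y : κ → Ω → ℝ)
    (hX : ∀ i ∈ s, Integrable (X i) P) (hY : ∀ j ∈ t, Integrable (Y j) P)
    (hXY : ∀ i ∈ s, ∀ j ∈ t, Integrable (fun ω => X i ω * Y j ω) P) :
    covar P (fun ω => ∑ i ∈ s, a i * X i ω) (fun ω => ∑ j ∈ t, b j * Y j ω)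
      = ∑ i ∈ s, ∑ j ∈ t, a i * b j
          * (∫ ω, X i ω * Y j ω ∂P - (∫ ω, X i ω ∂P) * ∫ ω, Y j ω ∂P) := by
  have hprod : ∀ ω, (∑ i ∈ s, a i * X i ω) * (∑ j ∈ t, b j * Y j ω)
      = ∑ i ∈ s, ∑ j ∈ t, a i * b j * (X i ω * Y j ω) := fun ω => by
    rw [Finset.sum_mul_sum]
    exact Finset.sum_congr rfl fun i _ => Finset.sum_congr rfl fun j _ => by ring
  simp only [covar, hprod]
  rw [integral_finsetSum _ fun i hi =>
      integrable_finsetSum _ fun j hj => (hXY i hi j hj).const_mul _,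
    integral_finsetSum _ fun i hi => (hX i hi).const_mul _,
    integral_finsetSum _ fun j hj => (hY j hj).const_mul _, Finset.sum_mul_sum,
    ← Finset.sum_sub_distrib]
  refine Finset.sum_congr rfl fun i hi => ?_
  rw [integral_finsetSum _ fun j hj => (hXY i hi j hj).const_mul _, ← Finset.sum_sub_distrib]
  refine Finset.sum_congr rfl fun j _ => ?_
  simp only [integral_const_mul]
  ring

theorem stmt3_general {Ω : Type*} [MeasurableSpace Ω] (P : Measure Ω) [IsProbabilityMeasure P]
    (h : ℝ) (hh : 0 < h) (Z : Ω → ℝ × ℝ) (hZ : Measurable Z)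
    (hpos : ∀ ω, 0 < (Z ω).1 ∧ 0 < (Z ω).2)
    (hdens : P.map Z = ((volume : Measure (ℝ × ℝ)).restrict
        (Set.Ioi (0 : ℝ) ×ˢ Set.Ioi (0 : ℝ))).withDensity
        (fun p => ENNReal.ofReal (lBR h p.1 p.2)))
    (hm1 : IsStdFrechet P (fun ω => (Z ω).1)) (hm2 : IsStdFrechet P (fun ω => (Z ω).2))
    (η1 η2 τ1 τ2 ξ1 ξ2 : ℝ) (β1 β2 : ℕ)
    (hb1 : (β1 : ℝ) * ξ1 < 1 / 2) (hb2 : (β2 : ℝ) * ξ2 < 1 / 2) :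
    covar P (fun ω => ((η1 - τ1 / ξ1) + (τ1 / ξ1) * (Z ω).1 ^ ξ1) ^ β1)
        (fun ω => ((η2 - τ2 / ξ2) + (τ2 / ξ2) * (Z ω).2 ^ ξ2) ^ β2) =
      ∑ k1 ∈ Finset.range (β1 + 1), ∑ k2 ∈ Finset.range (β2 + 1),
        ((β1.choose k1 : ℝ) * (η1 - τ1 / ξ1) ^ k1 * (τ1 / ξ1) ^ (β1 - k1)
          * (β2.choose k2 : ℝ) * (η2 - τ2 / ξ2) ^ k2 * (τ2 / ξ2) ^ (β2 - k2))
        * (gs (((β1 : ℝ) - k1) * ξ1) (((β2 : ℝ) - k2) * ξ2) h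
            - Real.Gamma (1 - ((β1 : ℝ) - k1) * ξ1) * Real.Gamma (1 - ((β2 : ℝ) - k2) * ξ2)) := by
  have hZ1 : Measurable fun ω => (Z ω).1 := measurable_fst.comp hZ
  have hZ2 : Measurable fun ω => (Z ω).2 := measurable_snd.comp hZ
  have hpos1 : ∀ ω, 0 < (Z ω).1 := fun ω => (hpos ω).1
  have hpos2 : ∀ ω, 0 < (Z ω).2 := fun ω => (hpos ω).2
  have hexp : ∀ {β : ℕ} {ξ : ℝ}, (β : ℝ) * ξ < 1 / 2 →
      ∀ k ∈ Finset.range (β + 1), ((β : ℝ) - k) * ξ < 1 / 2 := fun hb k hk =>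
    natCast_sub_mul_lt (Nat.lt_succ_iff.1 (Finset.mem_range.1 hk)) one_half_pos hb
  have hexpand1 := fun ω => add_mul_rpow_pow (hpos1 ω).le (η1 - τ1 / ξ1) (τ1 / ξ1) ξ1 β1
  have hexpand2 := fun ω => add_mul_rpow_pow (hpos2 ω).le (η2 - τ2 / ξ2) (τ2 / ξ2) ξ2 β2
  simp only [hexpand1, hexpand2]
  rw [covar_sum_mul_sum P _ _ _ _ (fun (k : ℕ) ω => (Z ω).1 ^ (((β1 : ℝ) - k) * ξ1))
    (fun (k : ℕ) ω => (Z ω).2 ^ (((β2 : ℝ) - k) * ξ2))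
    (fun k hk => hm1.integrable_rpow hZ1 hpos1 (by linarith [hexp hb1 k hk]))
    (fun k hk => hm2.integrable_rpow hZ2 hpos2 (by linarith [hexp hb2 k hk]))
    (fun k1 hk1 k2 hk2 => (hm1.memLp_two_rpow hZ1 hpos1 (hexp hb1 k1 hk1)).integrable_mul
      (hm2.memLp_two_rpow hZ2 hpos2 (hexp hb2 k2 hk2)))]
  refine Finset.sum_congr rfl fun k1 hk1 => Finset.sum_congr rfl fun k2 hk2 => ?_
  rw [integral_rpow_mul_rpow_eq_gs hh hZ hpos hdens
      (by linarith [hexp hb1 k1 hk1, hexp hb2 k2 hk2]),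
    hm1.integral_rpow hZ1 hpos1 (by linarith [hexp hb1 k1 hk1]),
    hm2.integral_rpow hZ2 hpos2 (by linarith [hexp hb2 k2 hk2])]
  ring

/-- Covariance formula for powers of GEV transforms of a Hüsler–Reiss pair with joint
density `l_h` and standard Fréchet margins. -/
theorem stmt3 {Ω : Type*} [MeasurableSpace Ω] (P : Measure Ω) [IsProbabilityMeasure P]
    (h : ℝ) (hh : 0 < h) (Z : Ω → ℝ × ℝ) (hZ : Measurable Z)
    (hpos : ∀ ω, 0 < (Z ω).1 ∧ 0 < (Z ω).2)
    (hdens : P.map Z = ((volume : Measure (ℝ × ℝ)).restrict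
        (Set.Ioi (0 : ℝ) ×ˢ Set.Ioi (0 : ℝ))).withDensity
        (fun p => ENNReal.ofReal (lBR h p.1 p.2)))
    (hm1 : IsStdFrechet P (fun ω => (Z ω).1)) (hm2 : IsStdFrechet P (fun ω => (Z ω).2))
    (η1 η2 τ1 τ2 ξ1 ξ2 : ℝ) (hτ1 : 0 < τ1) (hτ2 : 0 < τ2) (hξ1 : ξ1 ≠ 0) (hξ2 : ξ2 ≠ 0)
    (β1 β2 : ℕ) (hβ1 : 0 < β1) (hβ2 : 0 < β2)
    (hb1 : (β1 : ℝ) * ξ1 < 1 / 2) (hb2 : (β2 : ℝ) * ξ2 < 1 / 2) :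
    covar P (fun ω => ((η1 - τ1 / ξ1) + (τ1 / ξ1) * (Z ω).1 ^ ξ1) ^ β1)
        (fun ω => ((η2 - τ2 / ξ2) + (τ2 / ξ2) * (Z ω).2 ^ ξ2) ^ β2) =
      ∑ k1 ∈ Finset.range (β1 + 1), ∑ k2 ∈ Finset.range (β2 + 1),
        ((β1.choose k1 : ℝ) * (η1 - τ1 / ξ1) ^ k1 * (τ1 / ξ1) ^ (β1 - k1)
          * (β2.choose k2 : ℝ) * (η2 - τ2 / ξ2) ^ k2 * (τ2 / ξ2) ^ (β2 - k2))
        * (gs (((β1 : ℝ) - k1) * ξ1) (((β2 : ℝ) - k2) * ξ2) h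
            - Real.Gamma (1 - ((β1 : ℝ) - k1) * ξ1) * Real.Gamma (1 - ((β2 : ℝ) - k2) * ξ2)) :=
  stmt3_general P h hh Z hZ hpos hdens hm1 hm2 η1 η2 τ1 τ2 ξ1 ξ2 β1 β2 hb1 hb2
end

section
/- Let (X1, X2) and (Y1, Y2) be random vectors with values in (0,∞)² such that X1 and Y1 have the same distribution and X2 and Y2 have the same distribution. If P(X1 ≤ z1, X2 ≤ z2) < P(Y1 ≤ z1, Y2 ≤ z2) for all z1, z2 > 0, then Cov(f1(X1), f2(X2)) < Cov(f1(Y1), f2(Y2)) for all strictly increasing functions f1 : (0,∞) → ℝ and f2 : (0,∞) → ℝ for which these covariances exist. -/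
open MeasureTheory Set


/-- extend a function strictly monotone on `(0,∞)` to a measurable function. -/
lemma exists_meas_ext (f : ℝ → ℝ) (hf : StrictMonoOn f (Set.Ioi 0)) :
    ∃ g : ℝ → ℝ, Measurable g ∧ ∀ x ∈ Set.Ioi (0:ℝ), g x = f x := by
  refine ⟨fun x => if 0 < x then f x else 0, ?_, fun x hx => if_pos hx⟩
  apply measurable_of_Ioi
  intro a
  have : (fun x => if 0 < x then f x else 0) ⁻¹' Set.Ioi a =
      {x : ℝ | 0 < x ∧ a < f x} ∪ (if a < 0 then Set.Iic (0:ℝ) else ∅) := by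
    ext x
    by_cases hx : 0 < x <;> by_cases ha : a < 0 <;>
      simp [Set.mem_preimage, hx, ha, Set.mem_Iic, le_of_not_gt]
  rw [this]
  have h1 : MeasurableSet {x : ℝ | 0 < x ∧ a < f x} := by
    have : OrdConnected {x : ℝ | 0 < x ∧ a < f x} := by
      constructor
      intro x hx y hy z hz
      exact ⟨lt_of_lt_of_le hx.1 hz.1,
        lt_of_lt_of_le hx.2 (hf.monotoneOn hx.1 (lt_of_lt_of_le hx.1 hz.1) hz.1)⟩
    exact this.measurableSet
  refine h1.union ?_
  split <;> simp [measurableSet_Iic]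

/-- shape of an "upper level set" of a strictly monotone function on `(0,∞)`. -/
lemma upper_shape (g : ℝ → ℝ) (hg : StrictMonoOn g (Set.Ioi 0)) (s : ℝ) :
    {x : ℝ | 0 < x ∧ s < g x} = ∅ ∨ {x : ℝ | 0 < x ∧ s < g x} = Set.Ioi 0 ∨
      ∃ c > (0:ℝ), ({x : ℝ | 0 < x ∧ s < g x} = Set.Ioi c ∨
        {x : ℝ | 0 < x ∧ s < g x} = Set.Ici c) := by
  set A := {x : ℝ | 0 < x ∧ s < g x} with hA
  have hupper : ∀ x ∈ A, ∀ y, x ≤ y → y ∈ A := by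
    intro x hx y hxy
    have hy : (0:ℝ) < y := lt_of_lt_of_le hx.1 hxy
    exact ⟨hy, lt_of_lt_of_le hx.2 (hg.monotoneOn hx.1 hy hxy)⟩
  by_cases h0 : A = ∅
  · exact Or.inl h0
  by_cases h1 : A = Set.Ioi 0
  · exact Or.inr (Or.inl h1)
  right; right
  obtain ⟨x1, hx1⟩ := Set.nonempty_iff_ne_empty.2 h0
  have hAsub : A ⊆ Set.Ioi 0 := fun x hx => hx.1
  obtain ⟨x0, hx0, hx0A⟩ : ∃ x0, x0 ∈ Set.Ioi (0:ℝ) ∧ x0 ∉ A := by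
    by_contra h
    push_neg at h
    exact h1 (Set.Subset.antisymm hAsub h)
  have hbdd : ∀ y ∈ A, x0 ≤ y := by
    intro y hy
    by_contra hc
    exact hx0A (hupper y hy x0 (le_of_not_ge hc))
  have hBdd : BddBelow A := ⟨x0, hbdd⟩
  set c := sInf A with hc
  have hcx0 : x0 ≤ c := le_csInf ⟨x1, hx1⟩ hbdd
  have hcpos : 0 < c := lt_of_lt_of_le hx0 hcx0
  have hsub1 : Set.Ioi c ⊆ A := by
    intro y hy
    obtain ⟨z, hzA, hzy⟩ := (csInf_lt_iff hBdd ⟨x1, hx1⟩).1 hy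
    exact hupper z hzA y hzy.le
  have hsub2 : A ⊆ Set.Ici c := fun y hy => csInf_le hBdd hy
  refine ⟨c, hcpos, ?_⟩
  by_cases hcA : c ∈ A
  · right
    refine Set.Subset.antisymm hsub2 ?_
    intro y hy
    exact hupper c hcA y hy
  · left
    refine Set.Subset.antisymm ?_ hsub1
    intro y hy
    rcases lt_or_eq_of_le (show c ≤ y from hsub2 hy) with h | h
    · exact h
    · exact (hcA (h ▸ hy)).elim

/-- approximating sequence for `Ioi c` / `Ici c` from strictly below. -/
lemma seq_approx (c : ℝ) (hc : 0 < c) (A : Set ℝ)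
    (h : A = Set.Ioi c ∨ A = Set.Ici c) :
    ∃ cs : ℕ → ℝ, Monotone cs ∧ (∀ n, 0 < cs n) ∧ (∀ n, A ⊆ Set.Ioi (cs n)) ∧
      (⋂ n, Set.Ioi (cs n)) ⊆ A := by
  rcases h with rfl | rfl
  · exact ⟨fun _ => c, monotone_const, fun _ => hc, fun _ => subset_rfl,
      Set.iInter_subset _ 0⟩
  · refine ⟨fun n => c - c / (n + 2), ?_, ?_, ?_, ?_⟩
    · intro m n hmn
      have h2 : (0:ℝ) < (m:ℝ) + 2 := by positivity
      have : c / ((n:ℝ) + 2) ≤ c / ((m:ℝ) + 2) := by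
        apply div_le_div_of_nonneg_left hc.le h2
        exact_mod_cast by omega
      linarith
    · intro n
      have h2 : c / ((n:ℝ) + 2) ≤ c / 2 := by
        apply div_le_div_of_nonneg_left hc.le (by norm_num)
        exact_mod_cast by omega
      have := hc
      nlinarith [div_pos hc (show (0:ℝ) < (n:ℝ)+2 by positivity)]
    · intro n x hx
      have : (0:ℝ) < c / ((n:ℝ) + 2) := div_pos hc (by positivity)
      simp only [Set.mem_Ici] at hx
      simp only [Set.mem_Ioi]
      linarith
    · intro x hx
      simp only [Set.mem_iInter, Set.mem_Ioi] at hx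
      simp only [Set.mem_Ici]
      by_contra hxc
      push_neg at hxc
      obtain ⟨n, hn⟩ := exists_nat_gt (c / (c - x))
      have hcx : 0 < c - x := by linarith
      have h1 : c / ((n:ℝ) + 2) < c - x := by
        rw [div_lt_iff₀ (by positivity)]
        have : c / (c - x) < (n:ℝ) + 2 := by linarith
        calc c = (c / (c - x)) * (c - x) := by field_simp
        _ < ((n:ℝ) + 2) * (c - x) := mul_lt_mul_of_pos_right this hcx
        _ = (c - x) * ((n:ℝ) + 2) := mul_comm _ _
      have := hx n
      linarith


noncomputable def ee (a u : ℝ) : ℝ → ℝ :=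
  fun s => (Set.Iio u).indicator (fun _ => (1:ℝ)) s - (Set.Iio a).indicator (fun _ => (1:ℝ)) s

lemma ee_eq (a u : ℝ) : ee a u = fun s =>
    (Set.Ico a u).indicator (fun _ => (1:ℝ)) s - (Set.Ico u a).indicator (fun _ => (1:ℝ)) s := by
  funext s
  unfold ee
  by_cases h1 : s < u <;> by_cases h2 : s < a <;>
    simp [Set.indicator_apply, Set.mem_Iio, Set.mem_Ico, h1, h2, not_lt.1, le_of_not_gt] <;>
    first
      | rfl
      | (simp [not_lt.1 h1, not_lt.1 h2])

lemma abs_ee_eq (a u : ℝ) : (fun s => |ee a u s|) = fun s =>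
    (Set.Ico a u).indicator (fun _ => (1:ℝ)) s + (Set.Ico u a).indicator (fun _ => (1:ℝ)) s := by
  funext s
  unfold ee
  by_cases h1 : s < u <;> by_cases h2 : s < a <;>
    simp [Set.indicator_apply, Set.mem_Iio, Set.mem_Ico, h1, h2, not_lt.1, le_of_not_gt]

lemma ico_ind_integrable (a u : ℝ) :
    Integrable ((Set.Ico a u).indicator (fun _ => (1:ℝ))) volume := by
  rw [integrable_indicator_iff measurableSet_Ico]
  exact integrableOn_const (by rw [Real.volume_Ico]; exact ENNReal.ofReal_ne_top)

lemma ico_ind_integral (a u : ℝ) :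
    (∫ s, (Set.Ico a u).indicator (fun _ => (1:ℝ)) s) = max (u - a) 0 := by
  rw [integral_indicator measurableSet_Ico, setIntegral_const, measureReal_def, Real.volume_Ico,
    ENNReal.toReal_ofReal', smul_eq_mul, mul_one]

lemma ee_integrable (a u : ℝ) : Integrable (ee a u) volume := by
  rw [ee_eq]
  exact (ico_ind_integrable a u).sub (ico_ind_integrable u a)

lemma ee_integral (a u : ℝ) : (∫ s, ee a u s) = u - a := by
  rw [ee_eq]
  rw [integral_sub (ico_ind_integrable a u) (ico_ind_integrable u a),
    ico_ind_integral, ico_ind_integral]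
  rcases le_total a u with h | h
  · rw [max_eq_left (by linarith), max_eq_right (by linarith)]; ring
  · rw [max_eq_right (by linarith), max_eq_left (by linarith)]; ring

lemma abs_ee_integrable (a u : ℝ) : Integrable (fun s => |ee a u s|) volume :=
  (ee_integrable a u).abs

lemma abs_ee_integral (a u : ℝ) : (∫ s, |ee a u s|) = |u - a| := by
  rw [abs_ee_eq]
  rw [integral_add (ico_ind_integrable a u) (ico_ind_integrable u a),
    ico_ind_integral, ico_ind_integral]
  rcases le_total a u with h | h
  · rw [max_eq_left (by linarith), max_eq_right (by linarith), abs_of_nonneg (by linarith)]; ring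
  · rw [max_eq_right (by linarith), max_eq_left (by linarith), abs_of_nonpos (by linarith)]; ring

lemma ind_one_integrable {Ω : Type*} [MeasurableSpace Ω] (μ : Measure Ω) [IsFiniteMeasure μ]
    (S : Set Ω) (hS : MeasurableSet S) :
    Integrable (S.indicator (fun _ => (1:ℝ))) μ :=
  (integrable_const (1:ℝ)).indicator hS

lemma ind_one_integral {Ω : Type*} [MeasurableSpace Ω] (μ : Measure Ω) [IsFiniteMeasure μ]
    (S : Set Ω) (hS : MeasurableSet S) :
    (∫ ω, S.indicator (fun _ => (1:ℝ)) ω ∂μ) = (μ S).toReal := by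
  rw [integral_indicator hS, setIntegral_const, smul_eq_mul, mul_one, measureReal_def]

lemma k_formula {Ω : Type*} [MeasurableSpace Ω] (μ : Measure Ω) [IsProbabilityMeasure μ]
    (U V : Ω → ℝ) (hU : Measurable U) (hV : Measurable V) (a b s t : ℝ) :
    ∫ ω, ee a (U ω) s * ee b (V ω) t ∂μ
      = (μ {ω | s < U ω ∧ t < V ω}).toReal
        - (Set.Iio a).indicator (fun _ => (1:ℝ)) s * (μ {ω | t < V ω}).toReal
        - (Set.Iio b).indicator (fun _ => (1:ℝ)) t * (μ {ω | s < U ω}).toReal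
        + (Set.Iio a).indicator (fun _ => (1:ℝ)) s * (Set.Iio b).indicator (fun _ => (1:ℝ)) t := by
  have hmU : MeasurableSet {ω | s < U ω} := measurableSet_lt measurable_const hU
  have hmV : MeasurableSet {ω | t < V ω} := measurableSet_lt measurable_const hV
  have hmUV : MeasurableSet {ω | s < U ω ∧ t < V ω} := hmU.inter hmV
  have key : ∀ ω, ee a (U ω) s * ee b (V ω) t
      = ({ω | s < U ω ∧ t < V ω}).indicator (fun _ => (1:ℝ)) ω
        - (Set.Iio a).indicator (fun _ => (1:ℝ)) s * ({ω | t < V ω}).indicator (fun _ => (1:ℝ)) ω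
        - (Set.Iio b).indicator (fun _ => (1:ℝ)) t * ({ω | s < U ω}).indicator (fun _ => (1:ℝ)) ω
        + (Set.Iio a).indicator (fun _ => (1:ℝ)) s * (Set.Iio b).indicator (fun _ => (1:ℝ)) t := by
    intro ω
    unfold ee
    by_cases h1 : s < U ω <;> by_cases h2 : t < V ω <;>
      by_cases h3 : s < a <;> by_cases h4 : t < b <;>
      simp [Set.indicator_apply, Set.mem_Iio, Set.mem_setOf_eq, h1, h2, h3, h4] <;> ring
  rw [integral_congr_ae (Filter.Eventually.of_forall key)]
  have i1 := ind_one_integrable μ _ hmUV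
  have i2 := ind_one_integrable μ _ hmV
  have i3 := ind_one_integrable μ _ hmU
  set c1 := (Set.Iio a).indicator (fun _ => (1:ℝ)) s with hc1
  set c2 := (Set.Iio b).indicator (fun _ => (1:ℝ)) t with hc2
  have h2 : Integrable (fun ω => c1 * ({ω | t < V ω}).indicator (fun _ => (1:ℝ)) ω) μ :=
    i2.const_mul c1
  have h3 : Integrable (fun ω => c2 * ({ω | s < U ω}).indicator (fun _ => (1:ℝ)) ω) μ :=
    i3.const_mul c2
  have h12 : Integrable (fun ω => ({ω | s < U ω ∧ t < V ω}).indicator (fun _ => (1:ℝ)) ω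
      - c1 * ({ω | t < V ω}).indicator (fun _ => (1:ℝ)) ω) μ := i1.sub h2
  have h123 : Integrable (fun ω => ({ω | s < U ω ∧ t < V ω}).indicator (fun _ => (1:ℝ)) ω
      - c1 * ({ω | t < V ω}).indicator (fun _ => (1:ℝ)) ω
      - c2 * ({ω | s < U ω}).indicator (fun _ => (1:ℝ)) ω) μ := h12.sub h3
  rw [integral_add h123 (integrable_const (c1 * c2)), integral_sub h12 h3,
    integral_sub i1 h2, integral_const_mul, integral_const_mul, integral_const,
    ind_one_integral μ _ hmUV, ind_one_integral μ _ hmV, ind_one_integral μ _ hmU]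
  simp

lemma expand_int {Ω : Type*} [MeasurableSpace Ω] (μ : Measure Ω) [IsProbabilityMeasure μ]
    (U V : Ω → ℝ) (a b : ℝ) (hU : Integrable U μ) (hV : Integrable V μ)
    (hUV : Integrable (fun ω => U ω * V ω) μ) :
    ∫ ω, (U ω - a) * (V ω - b) ∂μ
      = (∫ ω, U ω * V ω ∂μ) - a * (∫ ω, V ω ∂μ) - b * (∫ ω, U ω ∂μ) + a * b := by
  have key : ∀ ω, (U ω - a) * (V ω - b) = U ω * V ω - a * V ω - b * U ω + a * b :=
    fun ω => by ring
  rw [integral_congr_ae (Filter.Eventually.of_forall key)]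
  have h2 : Integrable (fun ω => a * V ω) μ := hV.const_mul a
  have h3 : Integrable (fun ω => b * U ω) μ := hU.const_mul b
  have h12 : Integrable (fun ω => U ω * V ω - a * V ω) μ := hUV.sub h2
  have h123 : Integrable (fun ω => U ω * V ω - a * V ω - b * U ω) μ := h12.sub h3
  rw [integral_add h123 (integrable_const (a * b)), integral_sub h12 h3,
    integral_sub hUV h2, integral_const_mul, integral_const_mul, integral_const]
  simp

/-- If `(X1,X2)` and `(Y1,Y2)` are positive random vectors with equal margins and the joint
CDF of `(X1,X2)` is strictly below that of `(Y1,Y2)` on `(0,∞)²`, then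
`Cov(f1(X1), f2(X2)) < Cov(f1(Y1), f2(Y2))` for all strictly increasing `f1, f2` on `(0,∞)`
for which the covariances exist. -/
theorem stmt5 {Ω₁ Ω₂ : Type*} [MeasurableSpace Ω₁] [MeasurableSpace Ω₂]
    (P : Measure Ω₁) (Q : Measure Ω₂) [IsProbabilityMeasure P] [IsProbabilityMeasure Q]
    (X1 X2 : Ω₁ → ℝ) (Y1 Y2 : Ω₂ → ℝ)
    (hX1 : Measurable X1) (hX2 : Measurable X2) (hY1 : Measurable Y1) (hY2 : Measurable Y2)
    (hXpos : ∀ ω, 0 < X1 ω ∧ 0 < X2 ω) (hYpos : ∀ ω, 0 < Y1 ω ∧ 0 < Y2 ω)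
    (hm1 : P.map X1 = Q.map Y1) (hm2 : P.map X2 = Q.map Y2)
    (hlt : ∀ z1 > (0 : ℝ), ∀ z2 > (0 : ℝ),
      P {ω | X1 ω ≤ z1 ∧ X2 ω ≤ z2} < Q {ω | Y1 ω ≤ z1 ∧ Y2 ω ≤ z2})
    (f1 f2 : ℝ → ℝ) (hf1 : StrictMonoOn f1 (Set.Ioi 0)) (hf2 : StrictMonoOn f2 (Set.Ioi 0))
    (hiX1 : Integrable (fun ω => f1 (X1 ω)) P) (hiX2 : Integrable (fun ω => f2 (X2 ω)) P)
    (hiX12 : Integrable (fun ω => f1 (X1 ω) * f2 (X2 ω)) P)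
    (hiY1 : Integrable (fun ω => f1 (Y1 ω)) Q) (hiY2 : Integrable (fun ω => f2 (Y2 ω)) Q)
    (hiY12 : Integrable (fun ω => f1 (Y1 ω) * f2 (Y2 ω)) Q) :
    covar P (fun ω => f1 (X1 ω)) (fun ω => f2 (X2 ω)) <
      covar Q (fun ω => f1 (Y1 ω)) (fun ω => f2 (Y2 ω)) := by
  -- Step 0: replace f1, f2 by measurable versions
  obtain ⟨g1, hg1m, hg1e⟩ := exists_meas_ext f1 hf1
  obtain ⟨g2, hg2m, hg2e⟩ := exists_meas_ext f2 hf2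
  have hg1s : StrictMonoOn g1 (Set.Ioi 0) := by
    intro x hx y hy hxy
    rw [hg1e x hx, hg1e y hy]; exact hf1 hx hy hxy
  have hg2s : StrictMonoOn g2 (Set.Ioi 0) := by
    intro x hx y hy hxy
    rw [hg2e x hx, hg2e y hy]; exact hf2 hx hy hxy
  have e1P : (fun ω => f1 (X1 ω)) = fun ω => g1 (X1 ω) :=
    funext fun ω => (hg1e _ (hXpos ω).1).symm
  have e2P : (fun ω => f2 (X2 ω)) = fun ω => g2 (X2 ω) :=
    funext fun ω => (hg2e _ (hXpos ω).2).symm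
  have e1Q : (fun ω => f1 (Y1 ω)) = fun ω => g1 (Y1 ω) :=
    funext fun ω => (hg1e _ (hYpos ω).1).symm
  have e2Q : (fun ω => f2 (Y2 ω)) = fun ω => g2 (Y2 ω) :=
    funext fun ω => (hg2e _ (hYpos ω).2).symm
  have e12P : (fun ω => f1 (X1 ω) * f2 (X2 ω)) = fun ω => g1 (X1 ω) * g2 (X2 ω) :=
    funext fun ω => by rw [hg1e _ (hXpos ω).1, hg2e _ (hXpos ω).2]
  have e12Q : (fun ω => f1 (Y1 ω) * f2 (Y2 ω)) = fun ω => g1 (Y1 ω) * g2 (Y2 ω) :=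
    funext fun ω => by rw [hg1e _ (hYpos ω).1, hg2e _ (hYpos ω).2]
  rw [e1P] at hiX1; rw [e2P] at hiX2; rw [e12P] at hiX12
  rw [e1Q] at hiY1; rw [e2Q] at hiY2; rw [e12Q] at hiY12
  rw [e1P, e2P, e1Q, e2Q]
  clear e1P e2P e1Q e2Q e12P e12Q hf1 hf2 hg1e hg2e
  -- Step 1: equal marginal integrals
  have hEU : ∫ ω, g1 (X1 ω) ∂P = ∫ ω, g1 (Y1 ω) ∂Q := by
    rw [← integral_map hX1.aemeasurable hg1m.aestronglyMeasurable, hm1,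
      integral_map hY1.aemeasurable hg1m.aestronglyMeasurable]
  have hEV : ∫ ω, g2 (X2 ω) ∂P = ∫ ω, g2 (Y2 ω) ∂Q := by
    rw [← integral_map hX2.aemeasurable hg2m.aestronglyMeasurable, hm2,
      integral_map hY2.aemeasurable hg2m.aestronglyMeasurable]
  -- Step 2: equal marginal survival probabilities
  have hS1 : ∀ s : ℝ, P {ω | s < g1 (X1 ω)} = Q {ω | s < g1 (Y1 ω)} := by
    intro s
    have hms : MeasurableSet {x : ℝ | s < g1 x} := measurableSet_lt measurable_const hg1m
    have h1 : {ω | s < g1 (X1 ω)} = X1 ⁻¹' {x | s < g1 x} := rfl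
    have h2 : {ω | s < g1 (Y1 ω)} = Y1 ⁻¹' {x | s < g1 x} := rfl
    rw [h1, h2, ← Measure.map_apply hX1 hms, hm1, Measure.map_apply hY1 hms]
  have hS2 : ∀ t : ℝ, P {ω | t < g2 (X2 ω)} = Q {ω | t < g2 (Y2 ω)} := by
    intro t
    have hms : MeasurableSet {x : ℝ | t < g2 x} := measurableSet_lt measurable_const hg2m
    have h1 : {ω | t < g2 (X2 ω)} = X2 ⁻¹' {x | t < g2 x} := rfl
    have h2 : {ω | t < g2 (Y2 ω)} = Y2 ⁻¹' {x | t < g2 x} := rfl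
    rw [h1, h2, ← Measure.map_apply hX2 hms, hm2, Measure.map_apply hY2 hms]
  -- Step 3: strict joint survival inequality
  have hsur : ∀ z1 > (0:ℝ), ∀ z2 > (0:ℝ),
      P {ω | z1 < X1 ω ∧ z2 < X2 ω} < Q {ω | z1 < Y1 ω ∧ z2 < Y2 ω} := by
    intro z1 hz1 z2 hz2
    have hmA : MeasurableSet (X1 ⁻¹' (Set.Iic z1)) := hX1 measurableSet_Iic
    have hmB : MeasurableSet (X2 ⁻¹' (Set.Iic z2)) := hX2 measurableSet_Iic
    have hmA' : MeasurableSet (Y1 ⁻¹' (Set.Iic z1)) := hY1 measurableSet_Iic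
    have hmB' : MeasurableSet (Y2 ⁻¹' (Set.Iic z2)) := hY2 measurableSet_Iic
    have hPA : P (X1 ⁻¹' (Set.Iic z1)) = Q (Y1 ⁻¹' (Set.Iic z1)) := by
      rw [← Measure.map_apply hX1 measurableSet_Iic, hm1, Measure.map_apply hY1 measurableSet_Iic]
    have hPB : P (X2 ⁻¹' (Set.Iic z2)) = Q (Y2 ⁻¹' (Set.Iic z2)) := by
      rw [← Measure.map_apply hX2 measurableSet_Iic, hm2, Measure.map_apply hY2 measurableSet_Iic]
    have hint : P (X1 ⁻¹' (Set.Iic z1) ∩ X2 ⁻¹' (Set.Iic z2)) <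
        Q (Y1 ⁻¹' (Set.Iic z1) ∩ Y2 ⁻¹' (Set.Iic z2)) := by
      have h := hlt z1 hz1 z2 hz2
      have e1 : {ω | X1 ω ≤ z1 ∧ X2 ω ≤ z2} = X1 ⁻¹' (Set.Iic z1) ∩ X2 ⁻¹' (Set.Iic z2) := rfl
      have e2 : {ω | Y1 ω ≤ z1 ∧ Y2 ω ≤ z2} = Y1 ⁻¹' (Set.Iic z1) ∩ Y2 ⁻¹' (Set.Iic z2) := rfl
      rwa [e1, e2] at h
    have hunP : P (X1 ⁻¹' (Set.Iic z1) ∪ X2 ⁻¹' (Set.Iic z2)) +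
        P (X1 ⁻¹' (Set.Iic z1) ∩ X2 ⁻¹' (Set.Iic z2)) =
        P (X1 ⁻¹' (Set.Iic z1)) + P (X2 ⁻¹' (Set.Iic z2)) :=
      measure_union_add_inter _ hmB
    have hunQ : Q (Y1 ⁻¹' (Set.Iic z1) ∪ Y2 ⁻¹' (Set.Iic z2)) +
        Q (Y1 ⁻¹' (Set.Iic z1) ∩ Y2 ⁻¹' (Set.Iic z2)) =
        Q (Y1 ⁻¹' (Set.Iic z1)) + Q (Y2 ⁻¹' (Set.Iic z2)) :=
      measure_union_add_inter _ hmB'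
    have h2 : Q (Y1 ⁻¹' (Set.Iic z1) ∪ Y2 ⁻¹' (Set.Iic z2)) <
        P (X1 ⁻¹' (Set.Iic z1) ∪ X2 ⁻¹' (Set.Iic z2)) := by
      by_contra hcon
      push_neg at hcon
      have := ENNReal.add_lt_add_of_le_of_lt (measure_ne_top P _) hcon hint
      rw [hunP, hunQ, hPA, hPB] at this
      exact lt_irrefl _ this
    have ecP : {ω | z1 < X1 ω ∧ z2 < X2 ω} =
        (X1 ⁻¹' (Set.Iic z1) ∪ X2 ⁻¹' (Set.Iic z2))ᶜ := by
      ext ω; simp [not_or, not_le]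
    have ecQ : {ω | z1 < Y1 ω ∧ z2 < Y2 ω} =
        (Y1 ⁻¹' (Set.Iic z1) ∪ Y2 ⁻¹' (Set.Iic z2))ᶜ := by
      ext ω; simp [not_or, not_le]
    rw [ecP, ecQ]
    have e1 : P (X1 ⁻¹' (Set.Iic z1) ∪ X2 ⁻¹' (Set.Iic z2)) +
        P (X1 ⁻¹' (Set.Iic z1) ∪ X2 ⁻¹' (Set.Iic z2))ᶜ = 1 :=
      (measure_add_measure_compl (hmA.union hmB)).trans measure_univ
    have e2 : Q (Y1 ⁻¹' (Set.Iic z1) ∪ Y2 ⁻¹' (Set.Iic z2)) +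
        Q (Y1 ⁻¹' (Set.Iic z1) ∪ Y2 ⁻¹' (Set.Iic z2))ᶜ = 1 :=
      (measure_add_measure_compl (hmA'.union hmB')).trans measure_univ
    by_contra hcon
    push_neg at hcon
    have := ENNReal.add_lt_add_of_lt_of_le (measure_ne_top Q _) h2 hcon
    rw [e1, e2] at this
    exact lt_irrefl _ this
  -- Step 4: joint survival comparison for all levels
  have hupper : ∀ s t : ℝ, P {ω | s < g1 (X1 ω) ∧ t < g2 (X2 ω)} ≤
      Q {ω | s < g1 (Y1 ω) ∧ t < g2 (Y2 ω)} := by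
    intro s t
    have hmA : MeasurableSet {x : ℝ | 0 < x ∧ s < g1 x} := by
      have h : {x : ℝ | 0 < x ∧ s < g1 x} = Set.Ioi 0 ∩ g1 ⁻¹' (Set.Ioi s) := rfl
      rw [h]; exact measurableSet_Ioi.inter (hg1m measurableSet_Ioi)
    have hmB : MeasurableSet {x : ℝ | 0 < x ∧ t < g2 x} := by
      have h : {x : ℝ | 0 < x ∧ t < g2 x} = Set.Ioi 0 ∩ g2 ⁻¹' (Set.Ioi t) := rfl
      rw [h]; exact measurableSet_Ioi.inter (hg2m measurableSet_Ioi)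
    have hePX : {ω | s < g1 (X1 ω) ∧ t < g2 (X2 ω)} =
        {ω | X1 ω ∈ {x : ℝ | 0 < x ∧ s < g1 x} ∧ X2 ω ∈ {x : ℝ | 0 < x ∧ t < g2 x}} := by
      ext ω
      simp only [Set.mem_setOf_eq]
      constructor
      · exact fun h => ⟨⟨(hXpos ω).1, h.1⟩, ⟨(hXpos ω).2, h.2⟩⟩
      · exact fun h => ⟨h.1.2, h.2.2⟩
    have hePY : {ω | s < g1 (Y1 ω) ∧ t < g2 (Y2 ω)} =
        {ω | Y1 ω ∈ {x : ℝ | 0 < x ∧ s < g1 x} ∧ Y2 ω ∈ {x : ℝ | 0 < x ∧ t < g2 x}} := by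
      ext ω
      simp only [Set.mem_setOf_eq]
      constructor
      · exact fun h => ⟨⟨(hYpos ω).1, h.1⟩, ⟨(hYpos ω).2, h.2⟩⟩
      · exact fun h => ⟨h.1.2, h.2.2⟩
    rw [hePX, hePY]
    rcases upper_shape g1 hg1s s with hA | hA | ⟨c, hc, hA⟩
    · rw [hA]; simp
    · rw [hA]
      have h1 : {ω | X1 ω ∈ Set.Ioi (0:ℝ) ∧ X2 ω ∈ {x : ℝ | 0 < x ∧ t < g2 x}} =
          X2 ⁻¹' {x : ℝ | 0 < x ∧ t < g2 x} := by
        ext ω; simp [Set.mem_preimage, Set.mem_Ioi, (hXpos ω).1]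
      have h2 : {ω | Y1 ω ∈ Set.Ioi (0:ℝ) ∧ Y2 ω ∈ {x : ℝ | 0 < x ∧ t < g2 x}} =
          Y2 ⁻¹' {x : ℝ | 0 < x ∧ t < g2 x} := by
        ext ω; simp [Set.mem_preimage, Set.mem_Ioi, (hYpos ω).1]
      rw [h1, h2, ← Measure.map_apply hX2 hmB, hm2, Measure.map_apply hY2 hmB]
    · rcases upper_shape g2 hg2s t with hB | hB | ⟨d, hd, hB⟩
      · rw [hB]; simp
      · rw [hB]
        have h1 : {ω | X1 ω ∈ {x : ℝ | 0 < x ∧ s < g1 x} ∧ X2 ω ∈ Set.Ioi (0:ℝ)} =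
            X1 ⁻¹' {x : ℝ | 0 < x ∧ s < g1 x} := by
          ext ω; simp [Set.mem_preimage, Set.mem_Ioi, (hXpos ω).2]
        have h2 : {ω | Y1 ω ∈ {x : ℝ | 0 < x ∧ s < g1 x} ∧ Y2 ω ∈ Set.Ioi (0:ℝ)} =
            Y1 ⁻¹' {x : ℝ | 0 < x ∧ s < g1 x} := by
          ext ω; simp [Set.mem_preimage, Set.mem_Ioi, (hYpos ω).2]
        rw [h1, h2, ← Measure.map_apply hX1 hmA, hm1, Measure.map_apply hY1 hmA]
      · obtain ⟨cs, hcsm, hcsp, hcss, hcsi⟩ := seq_approx c hc _ hA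
        obtain ⟨ds, hdsm, hdsp, hdss, hdsi⟩ := seq_approx d hd _ hB
        have hQn : ∀ n, P {ω | X1 ω ∈ {x : ℝ | 0 < x ∧ s < g1 x} ∧
            X2 ω ∈ {x : ℝ | 0 < x ∧ t < g2 x}} ≤ Q {ω | cs n < Y1 ω ∧ ds n < Y2 ω} := by
          intro n
          refine le_trans (measure_mono ?_) (hsur (cs n) (hcsp n) (ds n) (hdsp n)).le
          intro ω hω
          exact ⟨hcss n hω.1, hdss n hω.2⟩
        have hanti : Antitone (fun n => {ω | cs n < Y1 ω ∧ ds n < Y2 ω}) := by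
          intro m n hmn ω hω
          exact ⟨lt_of_le_of_lt (hcsm hmn) hω.1, lt_of_le_of_lt (hdsm hmn) hω.2⟩
        have htend := tendsto_measure_iInter_atTop (μ := Q)
          (fun n => ((measurableSet_lt measurable_const hY1).inter
            (measurableSet_lt measurable_const hY2)).nullMeasurableSet)
          hanti ⟨0, measure_ne_top _ _⟩
        have hsubI : (⋂ n, {ω | cs n < Y1 ω ∧ ds n < Y2 ω}) ⊆
            {ω | Y1 ω ∈ {x : ℝ | 0 < x ∧ s < g1 x} ∧ Y2 ω ∈ {x : ℝ | 0 < x ∧ t < g2 x}} := by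
          intro ω hω
          simp only [Set.mem_iInter, Set.mem_setOf_eq] at hω
          refine ⟨hcsi ?_, hdsi ?_⟩
          · simp only [Set.mem_iInter, Set.mem_Ioi]
            exact fun n => (hω n).1
          · simp only [Set.mem_iInter, Set.mem_Ioi]
            exact fun n => (hω n).2
        calc P {ω | X1 ω ∈ {x : ℝ | 0 < x ∧ s < g1 x} ∧ X2 ω ∈ {x : ℝ | 0 < x ∧ t < g2 x}}
            ≤ Q (⋂ n, {ω | cs n < Y1 ω ∧ ds n < Y2 ω}) := ge_of_tendsto' htend hQn
          _ ≤ Q {ω | Y1 ω ∈ {x : ℝ | 0 < x ∧ s < g1 x} ∧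
                Y2 ω ∈ {x : ℝ | 0 < x ∧ t < g2 x}} := measure_mono hsubI
  set s0 := g1 1 with hs0
  set t0 := g2 1 with ht0
  -- strict inequality at the base point
  have hiff : ∀ (g : ℝ → ℝ), StrictMonoOn g (Set.Ioi 0) → ∀ x : ℝ, 0 < x →
      (g 1 < g x ↔ 1 < x) := by
    intro g hg x hx
    constructor
    · intro h
      by_contra hc
      push_neg at hc
      exact absurd h (not_lt.2 (hg.monotoneOn hx (by norm_num) hc))
    · intro h
      exact hg (by norm_num) hx h
  have hE0X : {ω | s0 < g1 (X1 ω) ∧ t0 < g2 (X2 ω)} = {ω | 1 < X1 ω ∧ 1 < X2 ω} := by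
    ext ω
    simp only [Set.mem_setOf_eq, hs0, ht0,
      hiff g1 hg1s _ (hXpos ω).1, hiff g2 hg2s _ (hXpos ω).2]
  have hE0Y : {ω | s0 < g1 (Y1 ω) ∧ t0 < g2 (Y2 ω)} = {ω | 1 < Y1 ω ∧ 1 < Y2 ω} := by
    ext ω
    simp only [Set.mem_setOf_eq, hs0, ht0,
      hiff g1 hg1s _ (hYpos ω).1, hiff g2 hg2s _ (hYpos ω).2]
  have hstrict0 : P {ω | s0 < g1 (X1 ω) ∧ t0 < g2 (X2 ω)} <
      Q {ω | s0 < g1 (Y1 ω) ∧ t0 < g2 (Y2 ω)} := by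
    rw [hE0X, hE0Y]; exact hsur 1 one_pos 1 one_pos
  -- right-continuity: find a positive margin
  have hmonoG : Monotone (fun n : ℕ =>
      {ω | s0 + 1/((n:ℝ)+1) < g1 (Y1 ω) ∧ t0 + 1/((n:ℝ)+1) < g2 (Y2 ω)}) := by
    intro m n hmn ω hω
    have h1 : 1/((n:ℝ)+1) ≤ 1/((m:ℝ)+1) := by
      apply one_div_le_one_div_of_le (by positivity)
      exact_mod_cast by omega
    exact ⟨by linarith [hω.1], by linarith [hω.2]⟩
  have hUG : (⋃ n : ℕ, {ω | s0 + 1/((n:ℝ)+1) < g1 (Y1 ω) ∧ t0 + 1/((n:ℝ)+1) < g2 (Y2 ω)})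
      = {ω | s0 < g1 (Y1 ω) ∧ t0 < g2 (Y2 ω)} := by
    ext ω
    simp only [Set.mem_iUnion, Set.mem_setOf_eq]
    constructor
    · rintro ⟨n, h1, h2⟩
      have : (0:ℝ) < 1/((n:ℝ)+1) := by positivity
      exact ⟨by linarith, by linarith⟩
    · rintro ⟨h1, h2⟩
      obtain ⟨n1, hn1⟩ := exists_nat_one_div_lt (show (0:ℝ) < g1 (Y1 ω) - s0 by linarith)
      obtain ⟨n2, hn2⟩ := exists_nat_one_div_lt (show (0:ℝ) < g2 (Y2 ω) - t0 by linarith)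
      refine ⟨max n1 n2, ?_, ?_⟩
      · have hle : 1/(((max n1 n2 : ℕ):ℝ)+1) ≤ 1/((n1:ℝ)+1) := by
          apply one_div_le_one_div_of_le (by positivity)
          have : (n1:ℝ) ≤ ((max n1 n2 : ℕ):ℝ) := by exact_mod_cast le_max_left n1 n2
          linarith
        linarith
      · have hle : 1/(((max n1 n2 : ℕ):ℝ)+1) ≤ 1/((n2:ℝ)+1) := by
          apply one_div_le_one_div_of_le (by positivity)
          have : (n2:ℝ) ≤ ((max n1 n2 : ℕ):ℝ) := by exact_mod_cast le_max_right n1 n2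
          linarith
        linarith
  have htendG := tendsto_measure_iUnion_atTop (μ := Q) hmonoG
  rw [hUG] at htendG
  obtain ⟨n0, hn0⟩ := ((tendsto_order.1 htendG).1 _ hstrict0).exists
  -- hn0 : P E0 < Q (G n0)
  set ε : ℝ := 1/((n0:ℝ)+1) with hεdef
  have hε : 0 < ε := by rw [hεdef]; positivity
  -- Fubini setup
  have hmeasP : Measurable (fun p : Ω₁ × (ℝ × ℝ) =>
      ee s0 (g1 (X1 p.1)) p.2.1 * ee t0 (g2 (X2 p.1)) p.2.2) := by
    have m1 : Measurable (fun p : Ω₁ × (ℝ × ℝ) => ee s0 (g1 (X1 p.1)) p.2.1) := by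
      unfold ee
      apply Measurable.sub
      · have he : (fun p : Ω₁ × (ℝ × ℝ) =>
            (Set.Iio (g1 (X1 p.1))).indicator (fun _ => (1:ℝ)) p.2.1)
            = ({q : Ω₁ × (ℝ × ℝ) | q.2.1 < g1 (X1 q.1)}).indicator (fun _ => (1:ℝ)) := by
          funext p
          by_cases h : p.2.1 < g1 (X1 p.1) <;>
            simp [Set.indicator_apply, Set.mem_Iio, Set.mem_setOf_eq, h]
        rw [he]
        exact measurable_const.indicator
          (measurableSet_lt measurable_snd.fst ((hg1m.comp hX1).comp measurable_fst))
      · exact (measurable_const.indicator measurableSet_Iio).comp measurable_snd.fst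
    have m2 : Measurable (fun p : Ω₁ × (ℝ × ℝ) => ee t0 (g2 (X2 p.1)) p.2.2) := by
      unfold ee
      apply Measurable.sub
      · have he : (fun p : Ω₁ × (ℝ × ℝ) =>
            (Set.Iio (g2 (X2 p.1))).indicator (fun _ => (1:ℝ)) p.2.2)
            = ({q : Ω₁ × (ℝ × ℝ) | q.2.2 < g2 (X2 q.1)}).indicator (fun _ => (1:ℝ)) := by
          funext p
          by_cases h : p.2.2 < g2 (X2 p.1) <;>
            simp [Set.indicator_apply, Set.mem_Iio, Set.mem_setOf_eq, h]
        rw [he]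
        exact measurable_const.indicator
          (measurableSet_lt measurable_snd.snd ((hg2m.comp hX2).comp measurable_fst))
      · exact (measurable_const.indicator measurableSet_Iio).comp measurable_snd.snd
    exact m1.mul m2
  have habsP : Integrable (fun ω => |g1 (X1 ω) - s0| * |g2 (X2 ω) - t0|) P := by
    have hexp : Integrable (fun ω => (g1 (X1 ω) - s0) * (g2 (X2 ω) - t0)) P := by
      have e : (fun ω => (g1 (X1 ω) - s0) * (g2 (X2 ω) - t0))
          = fun ω => g1 (X1 ω) * g2 (X2 ω) - s0 * g2 (X2 ω) - t0 * g1 (X1 ω) + s0 * t0 :=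
        funext fun ω => by ring
      rw [e]
      exact ((hiX12.sub (hiX2.const_mul s0)).sub (hiX1.const_mul t0)).add (integrable_const _)
    exact hexp.abs.congr (Filter.Eventually.of_forall fun ω => abs_mul _ _)
  have habsQ : Integrable (fun ω => |g1 (Y1 ω) - s0| * |g2 (Y2 ω) - t0|) Q := by
    have hexp : Integrable (fun ω => (g1 (Y1 ω) - s0) * (g2 (Y2 ω) - t0)) Q := by
      have e : (fun ω => (g1 (Y1 ω) - s0) * (g2 (Y2 ω) - t0))
          = fun ω => g1 (Y1 ω) * g2 (Y2 ω) - s0 * g2 (Y2 ω) - t0 * g1 (Y1 ω) + s0 * t0 :=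
        funext fun ω => by ring
      rw [e]
      exact ((hiY12.sub (hiY2.const_mul s0)).sub (hiY1.const_mul t0)).add (integrable_const _)
    exact hexp.abs.congr (Filter.Eventually.of_forall fun ω => abs_mul _ _)
  have hFP : Integrable (fun p : Ω₁ × (ℝ × ℝ) =>
      ee s0 (g1 (X1 p.1)) p.2.1 * ee t0 (g2 (X2 p.1)) p.2.2)
      (P.prod ((volume : Measure ℝ).prod (volume : Measure ℝ))) := by
    rw [integrable_prod_iff hmeasP.aestronglyMeasurable]
    constructor
    · exact Filter.Eventually.of_forall fun ω =>
        (ee_integrable s0 (g1 (X1 ω))).mul_prod (ee_integrable t0 (g2 (X2 ω)))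
    · have heq : (fun ω => ∫ z : ℝ × ℝ,
          ‖ee s0 (g1 (X1 ω)) z.1 * ee t0 (g2 (X2 ω)) z.2‖
            ∂((volume : Measure ℝ).prod (volume : Measure ℝ)))
          = fun ω => |g1 (X1 ω) - s0| * |g2 (X2 ω) - t0| := by
        funext ω
        simp_rw [norm_mul, Real.norm_eq_abs]
        rw [integral_prod_mul (fun s => |ee s0 (g1 (X1 ω)) s|) (fun t => |ee t0 (g2 (X2 ω)) t|),
          abs_ee_integral, abs_ee_integral]
      rw [heq]
      exact habsP
  have hmeasQ : Measurable (fun p : Ω₂ × (ℝ × ℝ) =>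
      ee s0 (g1 (Y1 p.1)) p.2.1 * ee t0 (g2 (Y2 p.1)) p.2.2) := by
    have m1 : Measurable (fun p : Ω₂ × (ℝ × ℝ) => ee s0 (g1 (Y1 p.1)) p.2.1) := by
      unfold ee
      apply Measurable.sub
      · have he : (fun p : Ω₂ × (ℝ × ℝ) =>
            (Set.Iio (g1 (Y1 p.1))).indicator (fun _ => (1:ℝ)) p.2.1)
            = ({q : Ω₂ × (ℝ × ℝ) | q.2.1 < g1 (Y1 q.1)}).indicator (fun _ => (1:ℝ)) := by
          funext p
          by_cases h : p.2.1 < g1 (Y1 p.1) <;>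
            simp [Set.indicator_apply, Set.mem_Iio, Set.mem_setOf_eq, h]
        rw [he]
        exact measurable_const.indicator
          (measurableSet_lt measurable_snd.fst ((hg1m.comp hY1).comp measurable_fst))
      · exact (measurable_const.indicator measurableSet_Iio).comp measurable_snd.fst
    have m2 : Measurable (fun p : Ω₂ × (ℝ × ℝ) => ee t0 (g2 (Y2 p.1)) p.2.2) := by
      unfold ee
      apply Measurable.sub
      · have he : (fun p : Ω₂ × (ℝ × ℝ) =>
            (Set.Iio (g2 (Y2 p.1))).indicator (fun _ => (1:ℝ)) p.2.2)
            = ({q : Ω₂ × (ℝ × ℝ) | q.2.2 < g2 (Y2 q.1)}).indicator (fun _ => (1:ℝ)) := by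
          funext p
          by_cases h : p.2.2 < g2 (Y2 p.1) <;>
            simp [Set.indicator_apply, Set.mem_Iio, Set.mem_setOf_eq, h]
        rw [he]
        exact measurable_const.indicator
          (measurableSet_lt measurable_snd.snd ((hg2m.comp hY2).comp measurable_fst))
      · exact (measurable_const.indicator measurableSet_Iio).comp measurable_snd.snd
    exact m1.mul m2
  have hFQ : Integrable (fun p : Ω₂ × (ℝ × ℝ) =>
      ee s0 (g1 (Y1 p.1)) p.2.1 * ee t0 (g2 (Y2 p.1)) p.2.2)
      (Q.prod ((volume : Measure ℝ).prod (volume : Measure ℝ))) := by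
    rw [integrable_prod_iff hmeasQ.aestronglyMeasurable]
    constructor
    · exact Filter.Eventually.of_forall fun ω =>
        (ee_integrable s0 (g1 (Y1 ω))).mul_prod (ee_integrable t0 (g2 (Y2 ω)))
    · have heq : (fun ω => ∫ z : ℝ × ℝ,
          ‖ee s0 (g1 (Y1 ω)) z.1 * ee t0 (g2 (Y2 ω)) z.2‖
            ∂((volume : Measure ℝ).prod (volume : Measure ℝ)))
          = fun ω => |g1 (Y1 ω) - s0| * |g2 (Y2 ω) - t0| := by
        funext ω
        simp_rw [norm_mul, Real.norm_eq_abs]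
        rw [integral_prod_mul (fun s => |ee s0 (g1 (Y1 ω)) s|) (fun t => |ee t0 (g2 (Y2 ω)) t|),
          abs_ee_integral, abs_ee_integral]
      rw [heq]
      exact habsQ
  -- the kernel functions
  set kP : ℝ × ℝ → ℝ :=
    fun z => ∫ ω, ee s0 (g1 (X1 ω)) z.1 * ee t0 (g2 (X2 ω)) z.2 ∂P with hkPdef
  set kQ : ℝ × ℝ → ℝ :=
    fun z => ∫ ω, ee s0 (g1 (Y1 ω)) z.1 * ee t0 (g2 (Y2 ω)) z.2 ∂Q with hkQdef
  have hswapP : ∫ ω, (g1 (X1 ω) - s0) * (g2 (X2 ω) - t0) ∂P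
      = ∫ z : ℝ × ℝ, kP z ∂((volume : Measure ℝ).prod (volume : Measure ℝ)) := by
    have hFP' : Integrable (Function.uncurry fun (ω : Ω₁) (z : ℝ × ℝ) =>
        ee s0 (g1 (X1 ω)) z.1 * ee t0 (g2 (X2 ω)) z.2)
        (P.prod ((volume : Measure ℝ).prod (volume : Measure ℝ))) := hFP
    have h1 := integral_integral_swap hFP'
    have h2 : ∀ ω, (∫ z : ℝ × ℝ, ee s0 (g1 (X1 ω)) z.1 * ee t0 (g2 (X2 ω)) z.2
        ∂((volume : Measure ℝ).prod (volume : Measure ℝ)))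
        = (g1 (X1 ω) - s0) * (g2 (X2 ω) - t0) := by
      intro ω
      rw [integral_prod_mul (ee s0 (g1 (X1 ω))) (ee t0 (g2 (X2 ω))), ee_integral, ee_integral]
    calc ∫ ω, (g1 (X1 ω) - s0) * (g2 (X2 ω) - t0) ∂P
        = ∫ ω, (∫ z : ℝ × ℝ, ee s0 (g1 (X1 ω)) z.1 * ee t0 (g2 (X2 ω)) z.2
            ∂((volume : Measure ℝ).prod (volume : Measure ℝ))) ∂P :=
          integral_congr_ae (Filter.Eventually.of_forall fun ω => (h2 ω).symm)
      _ = ∫ z : ℝ × ℝ, kP z ∂((volume : Measure ℝ).prod (volume : Measure ℝ)) := h1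
  have hswapQ : ∫ ω, (g1 (Y1 ω) - s0) * (g2 (Y2 ω) - t0) ∂Q
      = ∫ z : ℝ × ℝ, kQ z ∂((volume : Measure ℝ).prod (volume : Measure ℝ)) := by
    have hFQ' : Integrable (Function.uncurry fun (ω : Ω₂) (z : ℝ × ℝ) =>
        ee s0 (g1 (Y1 ω)) z.1 * ee t0 (g2 (Y2 ω)) z.2)
        (Q.prod ((volume : Measure ℝ).prod (volume : Measure ℝ))) := hFQ
    have h1 := integral_integral_swap hFQ'
    have h2 : ∀ ω, (∫ z : ℝ × ℝ, ee s0 (g1 (Y1 ω)) z.1 * ee t0 (g2 (Y2 ω)) z.2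
        ∂((volume : Measure ℝ).prod (volume : Measure ℝ)))
        = (g1 (Y1 ω) - s0) * (g2 (Y2 ω) - t0) := by
      intro ω
      rw [integral_prod_mul (ee s0 (g1 (Y1 ω))) (ee t0 (g2 (Y2 ω))), ee_integral, ee_integral]
    calc ∫ ω, (g1 (Y1 ω) - s0) * (g2 (Y2 ω) - t0) ∂Q
        = ∫ ω, (∫ z : ℝ × ℝ, ee s0 (g1 (Y1 ω)) z.1 * ee t0 (g2 (Y2 ω)) z.2
            ∂((volume : Measure ℝ).prod (volume : Measure ℝ))) ∂Q :=
          integral_congr_ae (Filter.Eventually.of_forall fun ω => (h2 ω).symm)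
      _ = ∫ z : ℝ × ℝ, kQ z ∂((volume : Measure ℝ).prod (volume : Measure ℝ)) := h1
  have hkPint : Integrable kP ((volume : Measure ℝ).prod (volume : Measure ℝ)) :=
    hFP.integral_prod_right
  have hkQint : Integrable kQ ((volume : Measure ℝ).prod (volume : Measure ℝ)) :=
    hFQ.integral_prod_right
  -- pointwise formula for the difference
  have hkP : ∀ z : ℝ × ℝ, kP z
      = (P {ω | z.1 < g1 (X1 ω) ∧ z.2 < g2 (X2 ω)}).toReal
        - (Set.Iio s0).indicator (fun _ => (1:ℝ)) z.1 * (P {ω | z.2 < g2 (X2 ω)}).toReal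
        - (Set.Iio t0).indicator (fun _ => (1:ℝ)) z.2 * (P {ω | z.1 < g1 (X1 ω)}).toReal
        + (Set.Iio s0).indicator (fun _ => (1:ℝ)) z.1
          * (Set.Iio t0).indicator (fun _ => (1:ℝ)) z.2 :=
    fun z => k_formula P (fun ω => g1 (X1 ω)) (fun ω => g2 (X2 ω))
      (hg1m.comp hX1) (hg2m.comp hX2) s0 t0 z.1 z.2
  have hkQ : ∀ z : ℝ × ℝ, kQ z
      = (Q {ω | z.1 < g1 (Y1 ω) ∧ z.2 < g2 (Y2 ω)}).toReal
        - (Set.Iio s0).indicator (fun _ => (1:ℝ)) z.1 * (Q {ω | z.2 < g2 (Y2 ω)}).toReal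
        - (Set.Iio t0).indicator (fun _ => (1:ℝ)) z.2 * (Q {ω | z.1 < g1 (Y1 ω)}).toReal
        + (Set.Iio s0).indicator (fun _ => (1:ℝ)) z.1
          * (Set.Iio t0).indicator (fun _ => (1:ℝ)) z.2 :=
    fun z => k_formula Q (fun ω => g1 (Y1 ω)) (fun ω => g2 (Y2 ω))
      (hg1m.comp hY1) (hg2m.comp hY2) s0 t0 z.1 z.2
  have hdiff : ∀ z : ℝ × ℝ, kQ z - kP z
      = (Q {ω | z.1 < g1 (Y1 ω) ∧ z.2 < g2 (Y2 ω)}).toReal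
        - (P {ω | z.1 < g1 (X1 ω) ∧ z.2 < g2 (X2 ω)}).toReal := by
    intro z
    rw [hkP z, hkQ z, hS1 z.1, hS2 z.2]
    ring
  have hDnn : ∀ z : ℝ × ℝ, 0 ≤ kQ z - kP z := by
    intro z
    rw [hdiff z]
    have := hupper z.1 z.2
    have h := (ENNReal.toReal_le_toReal (measure_ne_top P _) (measure_ne_top Q _)).2 this
    linarith
  have hDint : Integrable (fun z => kQ z - kP z)
      ((volume : Measure ℝ).prod (volume : Measure ℝ)) := hkQint.sub hkPint
  -- lower bound on the square R
  set R : Set (ℝ × ℝ) := Set.Icc s0 (s0 + ε) ×ˢ Set.Icc t0 (t0 + ε) with hRdef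
  have hRbound : ∀ z ∈ R, (Q {ω | s0 + ε < g1 (Y1 ω) ∧ t0 + ε < g2 (Y2 ω)}).toReal
      - (P {ω | s0 < g1 (X1 ω) ∧ t0 < g2 (X2 ω)}).toReal ≤ kQ z - kP z := by
    intro z hz
    obtain ⟨hz1, hz2⟩ := hz
    rw [hdiff z]
    have hQge : Q {ω | s0 + ε < g1 (Y1 ω) ∧ t0 + ε < g2 (Y2 ω)}
        ≤ Q {ω | z.1 < g1 (Y1 ω) ∧ z.2 < g2 (Y2 ω)} := by
      apply measure_mono
      intro ω hω
      exact ⟨lt_of_le_of_lt hz1.2 hω.1, lt_of_le_of_lt hz2.2 hω.2⟩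
    have hPle : P {ω | z.1 < g1 (X1 ω) ∧ z.2 < g2 (X2 ω)}
        ≤ P {ω | s0 < g1 (X1 ω) ∧ t0 < g2 (X2 ω)} := by
      apply measure_mono
      intro ω hω
      exact ⟨lt_of_le_of_lt hz1.1 hω.1, lt_of_le_of_lt hz2.1 hω.2⟩
    have h1 := (ENNReal.toReal_le_toReal (measure_ne_top Q _) (measure_ne_top Q _)).2 hQge
    have h2 := (ENNReal.toReal_le_toReal (measure_ne_top P _) (measure_ne_top P _)).2 hPle
    linarith
  have hcδpos : (P {ω | s0 < g1 (X1 ω) ∧ t0 < g2 (X2 ω)}).toReal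
      < (Q {ω | s0 + ε < g1 (Y1 ω) ∧ t0 + ε < g2 (Y2 ω)}).toReal := by
    apply (ENNReal.toReal_lt_toReal (measure_ne_top P _) (measure_ne_top Q _)).2
    exact hn0
  have hmR : MeasurableSet R := measurableSet_Icc.prod measurableSet_Icc
  have hvolR : ((volume : Measure ℝ).prod (volume : Measure ℝ)) R
      = ENNReal.ofReal ε * ENNReal.ofReal ε := by
    rw [hRdef, Measure.prod_prod, Real.volume_Icc, Real.volume_Icc, add_sub_cancel_left,
      add_sub_cancel_left]
  have hRfin : ((volume : Measure ℝ).prod (volume : Measure ℝ)) R ≠ ⊤ := by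
    rw [hvolR]
    exact ENNReal.mul_ne_top ENNReal.ofReal_ne_top ENNReal.ofReal_ne_top
  have hRtoReal : (((volume : Measure ℝ).prod (volume : Measure ℝ)) R).toReal = ε * ε := by
    rw [hvolR, ENNReal.toReal_mul, ENNReal.toReal_ofReal hε.le]
  have hlow := setIntegral_ge_of_const_le hmR hRfin hRbound hDint.integrableOn
  have hup := setIntegral_le_integral (s := R) hDint (Filter.Eventually.of_forall hDnn)
  have hpos : 0 < ∫ z, (kQ z - kP z) ∂((volume : Measure ℝ).prod (volume : Measure ℝ)) := by
    have h0 : 0 < ((Q {ω | s0 + ε < g1 (Y1 ω) ∧ t0 + ε < g2 (Y2 ω)}).toReal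
        - (P {ω | s0 < g1 (X1 ω) ∧ t0 < g2 (X2 ω)}).toReal)
        * (((volume : Measure ℝ).prod (volume : Measure ℝ)) R).toReal := by
      apply mul_pos (by linarith)
      rw [hRtoReal]
      positivity
    calc (0:ℝ) < _ := h0
      _ ≤ ∫ z in R, (kQ z - kP z) ∂((volume : Measure ℝ).prod (volume : Measure ℝ)) := by
          rw [smul_eq_mul, measureReal_def] at hlow; linarith
      _ ≤ _ := hup
  -- final assembly
  have hsplit : ∫ z, (kQ z - kP z) ∂((volume : Measure ℝ).prod (volume : Measure ℝ))
      = (∫ z, kQ z ∂((volume : Measure ℝ).prod (volume : Measure ℝ)))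
        - ∫ z, kP z ∂((volume : Measure ℝ).prod (volume : Measure ℝ)) :=
    integral_sub hkQint hkPint
  have hIP := expand_int P (fun ω => g1 (X1 ω)) (fun ω => g2 (X2 ω)) s0 t0 hiX1 hiX2 hiX12
  have hIQ := expand_int Q (fun ω => g1 (Y1 ω)) (fun ω => g2 (Y2 ω)) s0 t0 hiY1 hiY2 hiY12
  have hkey : ∫ ω, g1 (X1 ω) * g2 (X2 ω) ∂P < ∫ ω, g1 (Y1 ω) * g2 (Y2 ω) ∂Q := by
    have h1 : ∫ ω, (g1 (X1 ω) - s0) * (g2 (X2 ω) - t0) ∂P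
        < ∫ ω, (g1 (Y1 ω) - s0) * (g2 (Y2 ω) - t0) ∂Q := by
      rw [hswapP, hswapQ]
      linarith [hpos, hsplit]
    rw [hIP, hIQ] at h1
    rw [hEU, hEV] at h1
    linarith
  simp only [covar]
  rw [← hEU, ← hEV]
  exact sub_lt_sub_right hkey _
end

section
/- Let d ≥ 1 and let X : ℝ^d × Ω → ℝ be a jointly measurable random field on a probability space (Ω, ℱ, P) such that each X(x) follows the GEV distribution with parameters η ∈ ℝ, τ > 0, ξ ≠ 0. Let β be a positive integer with βξ < 1. Then, almost surely, the sample path x ↦ X(x, ω)^β is locally Lebesgue-integrable on ℝ^d. -/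
open MeasureTheory

/-- A random variable follows the GEV distribution with parameters `η ∈ ℝ`, `τ > 0`,
`ξ ≠ 0` if its CDF is `exp(-(1 + ξ(x-η)/τ)^(-1/ξ))` when `1 + ξ(x-η)/τ > 0`, `0` below the
support when `ξ > 0`, and `1` above the support when `ξ < 0`. -/
def IsGEV {Ω : Type*} [MeasurableSpace Ω] (P : MeasureTheory.Measure Ω) (X : Ω → ℝ)
    (η τ ξ : ℝ) : Prop :=
  ∀ x : ℝ, P {ω | X ω ≤ x} =
    if 0 < 1 + ξ * (x - η) / τ then
      ENNReal.ofReal (Real.exp (-((1 + ξ * (x - η) / τ) ^ (-1 / ξ))))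
    else if 0 < ξ then 0 else 1

/-!
All margins `X x` have the same law, so `E|X x|^β` does not depend on `x`. It is finite by the
layer-cake formula: when `ξ > 0` the law is bounded below and `P(Y > t) ≤ z(t)^(-1/ξ) ~ t^(-1/ξ)`
with `β < 1/ξ`, where `z(t) = 1 + ξ(t - η)/τ`; when `ξ < 0` it is bounded above and
`P(Y ≤ -t) = exp(-z(-t)^(-1/ξ))` decays faster than any power of `t`. By Tonelli,
`∫_K E|X x|^β dx < ∞` for every compact `K`, so almost every sample path is integrable on each
member of a compact exhaustion.
-/

open Set Filter Real
open scoped ENNReal Nat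

lemma Real.exp_neg_rpow_le_factorial_mul_rpow {v : ℝ} (hv : 0 < v) (s : ℝ) (n : ℕ) :
    exp (-v ^ s) ≤ n ! * v ^ (-(s * n)) := by
  have hvs : 0 < v ^ s := rpow_pos_of_pos hv s
  have h := pow_div_factorial_le_exp _ hvs.le n
  rw [div_le_iff₀ (by positivity)] at h
  rw [exp_neg, rpow_neg hv.le, rpow_mul hv.le, rpow_natCast, ← div_eq_mul_inv,
    inv_le_iff_one_le_mul₀ (exp_pos _), div_mul_eq_mul_div, le_div_iff₀ (by positivity), one_mul]
  linarith

lemma ENNReal.one_sub_ofReal_exp_neg_le (u : ℝ) :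
    1 - ENNReal.ofReal (exp (-u)) ≤ ENNReal.ofReal u := by
  rw [← ENNReal.ofReal_one, ← ENNReal.ofReal_sub _ (exp_nonneg _)]
  exact ENNReal.ofReal_le_ofReal (by linarith [add_one_le_exp (-u)])

lemma Real.rpow_neg_le_of_mul_le {c t z q : ℝ} (hc : 0 < c) (ht : 0 < t) (hz : c * t ≤ z)
    (hq : 0 ≤ q) : z ^ (-q) ≤ c ^ (-q) * t ^ (-q) := by
  rw [← mul_rpow hc.le ht.le]
  exact rpow_le_rpow_of_nonpos (by positivity) hz (neg_nonpos.mpr hq)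

lemma le_one_add_mul_sub_div {a τ η t : ℝ} (ha : 0 ≤ a) (hτ : 0 < τ) (ht : 2 * |η| ≤ t) :
    a / (2 * τ) * t ≤ 1 + a * (t - η) / τ := by
  rw [div_mul_eq_mul_div, div_le_iff₀ (by positivity)]
  calc a * t ≤ 2 * τ + 2 * (a * (t - η)) := by
        nlinarith [mul_nonneg ha (by linarith [le_abs_self η] : 0 ≤ t - 2 * η)]
    _ = (1 + a * (t - η) / τ) * (2 * τ) := by field_simp

lemma one_sub_mul_sub_div_nonpos {a τ η t : ℝ} (ha : 0 < a) (hτ : 0 < τ)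
    (ht : |η| + τ / a ≤ t) : 1 - a * (t - η) / τ ≤ 0 := by
  have hτa : τ ≤ a * (t - |η|) := by rw [← div_le_iff₀' ha]; linarith
  rw [sub_nonpos, le_div_iff₀ hτ, one_mul]
  nlinarith [mul_le_mul_of_nonneg_left (le_abs_self η) ha.le]

namespace MeasureTheory

variable {Ω : Type*} [MeasurableSpace Ω]

lemma measure_lt_abs_le (μ : Measure Ω) (Y : Ω → ℝ) (t : ℝ) :
    μ {ω | t < |Y ω|} ≤ μ {ω | t < Y ω} + μ {ω | Y ω ≤ -t} := by
  refine (measure_mono fun ω (hω : t < |Y ω|) => ?_).trans (measure_union_le _ _)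
  rcases lt_abs.mp hω with h | h
  · exact Or.inl h
  · exact Or.inr (show Y ω ≤ -t by linarith)

lemma prob_lt_eq_one_sub {P : Measure Ω} [IsProbabilityMeasure P] {Y : Ω → ℝ}
    (hY : Measurable Y) (t : ℝ) : P {ω | t < Y ω} = 1 - P {ω | Y ω ≤ t} := by
  rw [← prob_compl_eq_one_sub (measurableSet_le hY measurable_const)]
  simp only [compl_ofPred, not_le]

theorem lintegral_rpow_abs_lt_top_of_tail_le {μ : Measure Ω} [IsFiniteMeasure μ] {Y : Ω → ℝ}
    (hY : AEMeasurable Y μ) {p r C : ℝ} (hp : 0 < p) (hpr : p < r)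
    (htail : ∀ᶠ t in atTop, μ {ω | t < |Y ω|} ≤ ENNReal.ofReal (C * t ^ (-r))) :
    ∫⁻ ω, ENNReal.ofReal (|Y ω| ^ p) ∂μ < ∞ := by
  obtain ⟨M, hM⟩ := eventually_atTop.mp (htail.and (eventually_gt_atTop 0))
  have hM0 : 0 < M := (hM M le_rfl).2
  rw [lintegral_rpow_eq_lintegral_meas_lt_mul μ (ae_of_all _ fun _ => abs_nonneg _) hY.abs hp,
    ← Ioc_union_Ioi_eq_Ioi hM0.le, lintegral_union measurableSet_Ioi (Ioc_disjoint_Ioi le_rfl)]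
  refine ENNReal.mul_lt_top ENNReal.ofReal_lt_top (ENNReal.add_lt_top.mpr ⟨?_, ?_⟩)
  · calc ∫⁻ t in Ioc 0 M, μ {ω | t < |Y ω|} * ENNReal.ofReal (t ^ (p - 1))
        ≤ ∫⁻ t in Ioc 0 M, ENNReal.ofReal ((μ univ).toReal * t ^ (p - 1)) := by
          refine setLIntegral_mono' measurableSet_Ioc fun t _ => ?_
          rw [ENNReal.ofReal_mul ENNReal.toReal_nonneg, ENNReal.ofReal_toReal (measure_ne_top μ _)]
          exact mul_le_mul_left (measure_mono (subset_univ _)) _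
      _ < ∞ := ((intervalIntegral.intervalIntegrable_rpow' (by linarith)).1.const_mul
          _).lintegral_lt_top
  · calc ∫⁻ t in Ioi M, μ {ω | t < |Y ω|} * ENNReal.ofReal (t ^ (p - 1))
        ≤ ∫⁻ t in Ioi M, ENNReal.ofReal (C * t ^ (p - 1 - r)) := by
          refine setLIntegral_mono' measurableSet_Ioi fun t (ht : M < t) => ?_
          have ht0 : 0 < t := hM0.trans ht
          rw [sub_eq_add_neg (p - 1), rpow_add ht0, mul_comm (t ^ (p - 1)), ← mul_assoc,
            ENNReal.ofReal_mul' (rpow_nonneg ht0.le _)]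
          gcongr
          exact (hM t ht.le).1
      _ < ∞ := ((integrableOn_Ioi_rpow_of_lt (by linarith) hM0).const_mul _).lintegral_lt_top

theorem ae_locallyIntegrable_of_lintegral_enorm_le {E F : Type*}
    [TopologicalSpace E] [LocallyCompactSpace E] [SigmaCompactSpace E] [MeasurableSpace E]
    [NormedAddCommGroup F] [MeasurableSpace F] [BorelSpace F]
    [SecondCountableTopology F] {μ : Measure E} [SFinite μ] [IsFiniteMeasureOnCompacts μ]
    {P : Measure Ω} [SFinite P] {f : E → Ω → F} (hf : Measurable (Function.uncurry f))
    {C : ℝ≥0∞} (hC : C ≠ ∞) (hfC : ∀ x, ∫⁻ ω, ‖f x ω‖ₑ ∂P ≤ C) :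
    ∀ᵐ ω ∂P, LocallyIntegrable (fun x => f x ω) μ := by
  let K := CompactExhaustion.choice E
  have hm : Measurable fun q : Ω × E => ‖f q.2 q.1‖ₑ := (hf.comp measurable_swap).enorm
  have hK : ∀ n, ∀ᵐ ω ∂P, ∫⁻ x in K n, ‖f x ω‖ₑ ∂μ < ∞ := fun n => by
    refine ae_lt_top hm.lintegral_prod_right (ne_of_lt ?_)
    rw [lintegral_lintegral_swap hm.aemeasurable]
    calc ∫⁻ x in K n, ∫⁻ ω, ‖f x ω‖ₑ ∂P ∂μ ≤ ∫⁻ _ in K n, C ∂μ := lintegral_mono hfC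
      _ = C * μ (K n) := setLIntegral_const _ _
      _ < ∞ := ENNReal.mul_lt_top hC.lt_top (K.isCompact n).measure_lt_top
  filter_upwards [ae_all_iff.mpr hK] with ω hω
  refine locallyIntegrable_iff.mpr fun k hk => ?_
  obtain ⟨n, hn⟩ := K.exists_superset_of_isCompact hk
  exact IntegrableOn.mono_set
    ⟨(hf.comp measurable_prodMk_right).aestronglyMeasurable, hω n⟩ hn

end MeasureTheory

namespace IsGEV

variable {Ω : Type*} [MeasurableSpace Ω] {P : Measure Ω} {Y : Ω → ℝ} {η τ ξ : ℝ}

lemma map_eq [IsFiniteMeasure P] {Y' : Ω → ℝ} (h : IsGEV P Y η τ ξ) (h' : IsGEV P Y' η τ ξ)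
    (hY : Measurable Y) (hY' : Measurable Y') : P.map Y = P.map Y' :=
  Measure.ext_of_Iic _ _ fun t => by
    rw [Measure.map_apply hY measurableSet_Iic, Measure.map_apply hY' measurableSet_Iic]
    exact (h t).trans (h' t).symm

variable [IsProbabilityMeasure P]

lemma prob_lt_le (h : IsGEV P Y η τ ξ) (hY : Measurable Y) {t : ℝ}
    (hz : 0 < 1 + ξ * (t - η) / τ) :
    P {ω | t < Y ω} ≤ ENNReal.ofReal ((1 + ξ * (t - η) / τ) ^ (-1 / ξ)) := by
  rw [prob_lt_eq_one_sub hY, h t, if_pos hz]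
  exact ENNReal.one_sub_ofReal_exp_neg_le _

lemma tail_le_of_pos (h : IsGEV P Y η τ ξ) (hY : Measurable Y) (hτ : 0 < τ) (hξ : 0 < ξ) :
    ∀ᶠ t in atTop, P {ω | t < |Y ω|} ≤
      ENNReal.ofReal ((ξ / (2 * τ)) ^ (-(1 / ξ)) * t ^ (-(1 / ξ))) := by
  filter_upwards [eventually_gt_atTop 0, eventually_ge_atTop (2 * |η|),
    eventually_ge_atTop (|-η| + τ / ξ)] with t ht hηt hτt
  have hlow : P {ω | Y ω ≤ -t} = 0 := by
    have hz : 1 + ξ * (-t - η) / τ ≤ 0 :=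
      (one_sub_mul_sub_div_nonpos hξ hτ hτt).trans_eq' (by ring)
    rw [h, if_neg hz.not_gt, if_pos hξ]
  have hz : ξ / (2 * τ) * t ≤ 1 + ξ * (t - η) / τ := le_one_add_mul_sub_div hξ.le hτ hηt
  calc P {ω | t < |Y ω|} ≤ P {ω | t < Y ω} + P {ω | Y ω ≤ -t} := measure_lt_abs_le P Y t
    _ = P {ω | t < Y ω} := by rw [hlow, add_zero]
    _ ≤ ENNReal.ofReal ((1 + ξ * (t - η) / τ) ^ (-(1 / ξ))) := by
      rw [← neg_div]; exact h.prob_lt_le hY (hz.trans_lt' (by positivity))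
    _ ≤ _ := ENNReal.ofReal_le_ofReal (rpow_neg_le_of_mul_le (by positivity) ht hz (by positivity))

lemma tail_le_of_neg (h : IsGEV P Y η τ ξ) (hY : Measurable Y) (hτ : 0 < τ) (hξ : ξ < 0)
    (n : ℕ) : ∀ᶠ t in atTop, P {ω | t < |Y ω|} ≤
      ENNReal.ofReal (n ! * (-ξ / (2 * τ)) ^ (-(-1 / ξ * n)) * t ^ (-(-1 / ξ * n))) := by
  filter_upwards [eventually_gt_atTop 0, eventually_ge_atTop (2 * |-η|),
    eventually_ge_atTop (|η| + τ / -ξ)] with t ht hηt hτt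
  have ha : 0 < -ξ := neg_pos.mpr hξ
  have hup : P {ω | t < Y ω} = 0 := by
    have hz : 1 + ξ * (t - η) / τ ≤ 0 :=
      (one_sub_mul_sub_div_nonpos ha hτ hτt).trans_eq' (by ring)
    rw [prob_lt_eq_one_sub hY, h, if_neg hz.not_gt, if_neg hξ.not_gt, tsub_self]
  have hz : -ξ / (2 * τ) * t ≤ 1 + ξ * (-t - η) / τ :=
    (le_one_add_mul_sub_div ha.le hτ hηt).trans_eq (by ring)
  have hz0 : 0 < 1 + ξ * (-t - η) / τ := hz.trans_lt' (by positivity)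
  calc P {ω | t < |Y ω|} ≤ P {ω | t < Y ω} + P {ω | Y ω ≤ -t} := measure_lt_abs_le P Y t
    _ = ENNReal.ofReal (exp (-(1 + ξ * (-t - η) / τ) ^ (-1 / ξ))) := by
      rw [hup, zero_add, h, if_pos hz0]
    _ ≤ _ := by
      refine ENNReal.ofReal_le_ofReal ((exp_neg_rpow_le_factorial_mul_rpow hz0 _ n).trans ?_)
      rw [mul_assoc]
      gcongr
      exact rpow_neg_le_of_mul_le (by positivity) ht hz
        (mul_nonneg (div_nonneg_of_nonpos (by norm_num) hξ.le) n.cast_nonneg)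

theorem lintegral_rpow_abs_lt_top (h : IsGEV P Y η τ ξ) (hY : Measurable Y) (hτ : 0 < τ)
    (hξ : ξ ≠ 0) {p : ℝ} (hp : 0 < p) (hpξ : p * ξ < 1) :
    ∫⁻ ω, ENNReal.ofReal (|Y ω| ^ p) ∂P < ∞ := by
  rcases hξ.lt_or_gt with hξ | hξ
  · obtain ⟨n, hn⟩ := exists_nat_gt (p * -ξ)
    refine lintegral_rpow_abs_lt_top_of_tail_le hY.aemeasurable hp ?_
      (h.tail_le_of_neg hY hτ hξ n)
    rw [div_mul_eq_mul_div, neg_one_mul, lt_div_iff_of_neg hξ]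
    linarith
  · exact lintegral_rpow_abs_lt_top_of_tail_le hY.aemeasurable hp
      (by rwa [lt_div_iff₀ hξ]) (h.tail_le_of_pos hY hτ hξ)

end IsGEV

theorem stmt12_general {Ω : Type*} [MeasurableSpace Ω] (P : Measure Ω) [IsProbabilityMeasure P]
    (d : ℕ)
    (X : EuclideanSpace ℝ (Fin d) → Ω → ℝ)
    (hX : Measurable (Function.uncurry X))
    (η τ ξ : ℝ) (hτ : 0 < τ) (hξ : ξ ≠ 0)
    (hGEV : ∀ x, IsGEV P (X x) η τ ξ)
    (β : ℕ) (hβ : 0 < β) (hβξ : (β : ℝ) * ξ < 1) :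
    ∀ᵐ ω ∂P, LocallyIntegrable (fun x => X x ω ^ β)
      (volume : Measure (EuclideanSpace ℝ (Fin d))) := by
  have hXm : ∀ x, Measurable (X x) := fun x => hX.comp measurable_prodMk_left
  have hg : Measurable fun y : ℝ => ‖y ^ β‖ₑ := by fun_prop
  have hmoment : ∫⁻ ω, ‖X 0 ω ^ β‖ₑ ∂P < ∞ := by
    simp_rw [Real.enorm_eq_ofReal_abs, abs_pow, ← rpow_natCast]
    exact (hGEV 0).lintegral_rpow_abs_lt_top (hXm 0) hτ hξ (by positivity) hβξ
  refine ae_locallyIntegrable_of_lintegral_enorm_le (hX.pow_const β) hmoment.ne fun x => ?_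
  rw [← lintegral_map hg (hXm x), ← lintegral_map hg (hXm 0),
    (hGEV x).map_eq (hGEV 0) (hXm x) (hXm 0)]

/-- For a jointly measurable random field `X` on `ℝ^d` with GEV(η, τ, ξ) margins and a
positive integer `β` with `βξ < 1`, almost surely the sample path `x ↦ X(x,ω)^β` is locally
Lebesgue-integrable on `ℝ^d`. -/
theorem stmt12 {Ω : Type*} [MeasurableSpace Ω] (P : Measure Ω) [IsProbabilityMeasure P]
    (d : ℕ) (hd : 1 ≤ d)
    (X : EuclideanSpace ℝ (Fin d) → Ω → ℝ)
    (hX : Measurable (Function.uncurry X))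
    (η τ ξ : ℝ) (hτ : 0 < τ) (hξ : ξ ≠ 0)
    (hGEV : ∀ x, IsGEV P (X x) η τ ξ)
    (β : ℕ) (hβ : 0 < β) (hβξ : (β : ℝ) * ξ < 1) :
    ∀ᵐ ω ∂P, LocallyIntegrable (fun x => X x ω ^ β)
      (volume : Measure (EuclideanSpace ℝ (Fin d))) :=
  stmt12_general P d X hX η τ ξ hτ hξ hGEV β hβ hβξ
end
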